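/- arXiv:math-ph/0412078 — 9 statements merged into one kernel-verified Lean document; each statement's English description precedes it below -/
import Mathlib

section
/- Let μ be a Borel probability measure on ℝ whose support is contained in a bounded open interval (a,b), let φ : ℝ → ℝ be a bounded, nondecreasing, continuously differentiable function, and let ε > 0. Then ∫_ℝ [φ(λ+ε) − φ(λ)] dμ(λ) ≤ s(μ,ε) · [φ(b+ε) − φ(a)]. -/
/-!
Let `ν` be the Stieltjes measure of `φ`, so that `φ (λ + ε) - φ λ = ν (Ioc λ (λ + ε))`.
By Tonelli, `∫ ν (Ioc λ (λ + ε)) dμ(λ) = ∫ μ (Ico (t - ε) t) dν(t)`. Since `μ` lives on `(a, b)`,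
the integrand vanishes outside `(a, b + ε]`, and it is at most `s(μ, ε)` everywhere, so the
integral is at most `s(μ, ε) · ν (Ioc a (b + ε)) = s(μ, ε) · (φ (b + ε) - φ a)`.
-/

open MeasureTheory Set

noncomputable def modulusOfContinuity (μ : Measure ℝ) (ε : ℝ) : ℝ :=
  ⨆ E : ℝ, (μ (Icc (E - ε) (E + ε))).toReal

section ModulusOfContinuity

variable (μ : Measure ℝ) [IsFiniteMeasure μ] (ε : ℝ)

lemma toReal_measure_Icc_le_modulusOfContinuity (E : ℝ) :
    (μ (Icc (E - ε) (E + ε))).toReal ≤ modulusOfContinuity μ ε :=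
  le_ciSup (f := fun E : ℝ => (μ (Icc (E - ε) (E + ε))).toReal)
    ⟨μ.real univ, by rintro _ ⟨E, rfl⟩; exact measureReal_mono (subset_univ _)⟩ E

lemma modulusOfContinuity_nonneg : 0 ≤ modulusOfContinuity μ ε :=
  ENNReal.toReal_nonneg.trans (toReal_measure_Icc_le_modulusOfContinuity μ ε 0)

lemma measure_Icc_le_modulusOfContinuity (E : ℝ) :
    μ (Icc (E - ε) (E + ε)) ≤ ENNReal.ofReal (modulusOfContinuity μ ε) :=
  (ENNReal.le_ofReal_iff_toReal_le (measure_ne_top _ _) (modulusOfContinuity_nonneg μ ε)).2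
    (toReal_measure_Icc_le_modulusOfContinuity μ ε E)

end ModulusOfContinuity

lemma lintegral_measure_Ioc_add_eq_lintegral_measure_Ico_sub (μ ν : Measure ℝ) [SFinite μ]
    [SFinite ν] (ε : ℝ) :
    ∫⁻ x, ν (Ioc x (x + ε)) ∂μ = ∫⁻ t, μ (Ico (t - ε) t) ∂ν := by
  have hS : MeasurableSet {p : ℝ × ℝ | p.1 < p.2 ∧ p.2 ≤ p.1 + ε} :=
    (measurableSet_lt measurable_fst measurable_snd).inter
      (measurableSet_le measurable_snd (measurable_fst.add_const ε))
  calc ∫⁻ x, ν (Ioc x (x + ε)) ∂μ = μ.prod ν {p | p.1 < p.2 ∧ p.2 ≤ p.1 + ε} :=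
        (Measure.prod_apply hS).symm
    _ = ∫⁻ t, μ (Ico (t - ε) t) ∂ν := by
        rw [Measure.prod_apply_symm hS]
        congr! with t
        ext x
        simp only [mem_preimage, mem_ofPred_eq, mem_Ico]
        constructor <;> rintro ⟨h₁, h₂⟩ <;> constructor <;> linarith

lemma measure_Ico_sub_eq_zero_of_notMem_Ioc {μ : Measure ℝ} {a b ε t : ℝ}
    (hμ : μ (Ioo a b)ᶜ = 0) (ht : t ∉ Ioc a (b + ε)) : μ (Ico (t - ε) t) = 0 := by
  refine measure_mono_null (fun x hx (hx' : x ∈ Ioo a b) => ht ?_) hμ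
  exact ⟨hx'.1.trans hx.2, by linarith [hx.1, hx'.2]⟩

lemma lintegral_measure_Ico_sub_le {μ : Measure ℝ} {a b ε : ℝ} (hμ : μ (Ioo a b)ᶜ = 0)
    {S : ENNReal} (hS : ∀ t, μ (Icc (t - ε) (t + ε)) ≤ S) (hε : 0 ≤ ε) {ν : Measure ℝ} :
    ∫⁻ t, μ (Ico (t - ε) t) ∂ν ≤ S * ν (Ioc a (b + ε)) := by
  rw [← setLIntegral_eq_of_support_subset (s := Ioc a (b + ε))
    (Function.support_subset_iff'.2 fun _ ht => measure_Ico_sub_eq_zero_of_notMem_Ioc hμ ht)]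
  calc ∫⁻ t in Ioc a (b + ε), μ (Ico (t - ε) t) ∂ν
      ≤ ∫⁻ _ in Ioc a (b + ε), S ∂ν :=
        lintegral_mono fun t => (measure_mono (Ico_subset_Icc_self.trans
          (Icc_subset_Icc_right (by linarith)))).trans (hS t)
    _ = S * ν (Ioc a (b + ε)) := setLIntegral_const _ _

theorem StieltjesFunction.integral_sub_le_modulusOfContinuity_mul (f : StieltjesFunction ℝ)
    (μ : Measure ℝ) [IsFiniteMeasure μ] {a b ε : ℝ} (hμ : μ (Ioo a b)ᶜ = 0) (hε : 0 ≤ ε)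
    (hab : a ≤ b + ε) :
    ∫ x, (f (x + ε) - f x) ∂μ ≤ modulusOfContinuity μ ε * (f (b + ε) - f a) := by
  have hinc : ∀ x, 0 ≤ f (x + ε) - f x := fun x => sub_nonneg.2 (f.mono (by linarith))
  have hmeas : Measurable fun x => f (x + ε) - f x :=
    (f.mono.measurable.comp (measurable_add_const ε)).sub f.mono.measurable
  rw [integral_eq_lintegral_of_nonneg_ae (.of_forall hinc) hmeas.aestronglyMeasurable]
  refine ENNReal.toReal_le_of_le_ofReal
    (mul_nonneg (modulusOfContinuity_nonneg μ ε) (sub_nonneg.2 (f.mono hab))) ?_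
  calc ∫⁻ x, ENNReal.ofReal (f (x + ε) - f x) ∂μ
      = ∫⁻ x, f.measure (Ioc x (x + ε)) ∂μ := by simp only [f.measure_Ioc]
    _ = ∫⁻ t, μ (Ico (t - ε) t) ∂f.measure :=
        lintegral_measure_Ioc_add_eq_lintegral_measure_Ico_sub μ f.measure ε
    _ ≤ ENNReal.ofReal (modulusOfContinuity μ ε) * f.measure (Ioc a (b + ε)) :=
        lintegral_measure_Ico_sub_le hμ (measure_Icc_le_modulusOfContinuity μ ε) hε
    _ = ENNReal.ofReal (modulusOfContinuity μ ε * (f (b + ε) - f a)) := by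
        rw [f.measure_Ioc, ENNReal.ofReal_mul (modulusOfContinuity_nonneg μ ε)]

theorem ssf_partial_integration_bounded_interval_general
    (μ : Measure ℝ) [IsProbabilityMeasure μ] (a b : ℝ) (hab : a < b)
    (hsupp : μ (Set.Ioo a b)ᶜ = 0)
    (φ : ℝ → ℝ) (hmono : Monotone φ)
    (hC1 : ContDiff ℝ 1 φ) (ε : ℝ) (hε : 0 < ε) :
    ∫ lam, (φ (lam + ε) - φ lam) ∂μ
      ≤ (⨆ E : ℝ, (μ (Set.Icc (E - ε) (E + ε))).toReal) * (φ (b + ε) - φ a) :=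
  StieltjesFunction.integral_sub_le_modulusOfContinuity_mul
    ⟨φ, hmono, fun x => hC1.continuous.continuousWithinAt⟩ μ hsupp hε.le (by linarith)

/-- Let `μ` be a Borel probability measure on `ℝ` whose support is contained
in a bounded open interval `(a,b)`, let `φ : ℝ → ℝ` be a bounded, nondecreasing, continuously
differentiable function, and let `ε > 0`. Then
`∫ (φ(λ+ε) − φ(λ)) dμ(λ) ≤ s(μ,ε) · (φ(b+ε) − φ(a))`,
where `s(μ,ε) = sup_{E} μ([E−ε,E+ε])` is the modulus of continuity of `μ`. -/
theorem ssf_partial_integration_bounded_interval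
    (μ : Measure ℝ) [IsProbabilityMeasure μ] (a b : ℝ) (hab : a < b)
    (hsupp : μ (Set.Ioo a b)ᶜ = 0)
    (φ : ℝ → ℝ) (hmono : Monotone φ) (hbdd : ∃ M, ∀ x, |φ x| ≤ M)
    (hC1 : ContDiff ℝ 1 φ) (ε : ℝ) (hε : 0 < ε) :
    ∫ lam, (φ (lam + ε) - φ lam) ∂μ
      ≤ (⨆ E : ℝ, (μ (Set.Icc (E - ε) (E + ε))).toReal) * (φ (b + ε) - φ a) :=
  ssf_partial_integration_bounded_interval_general μ a b hab hsupp φ hmono hC1 ε hε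
end

section
/- Let μ be a Borel probability measure on ℝ whose support is contained in (a,∞) for some real a, let φ : ℝ → ℝ be a bounded, nondecreasing, continuously differentiable function, and let ε > 0. Then ∫_ℝ [φ(λ+ε) − φ(λ)] dμ(λ) ≤ s(μ,ε) · [L − φ(a)], where L = lim_{x→∞} φ(x) (which exists since φ is bounded and nondecreasing). -/
/-!
Writing `dφ` for the Stieltjes measure of (the right-continuous version of) `φ`, one has
`φ(λ+ε) − φ(λ) ≤ dφ([λ, λ+ε])`. By Tonelli, `∫ dφ([λ, λ+ε]) dμ(λ) = ∫ μ([t−ε, t]) dφ(t)`, and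
since `μ` lives on `(a, ∞)` the integrand vanishes for `t ≤ a` and is at most `s(μ,ε)` otherwise,
while `dφ((a, ∞)) ≤ L − φ(a)`.
-/

open MeasureTheory Filter Set ENNReal Topology

theorem MeasureTheory.lintegral_measure_Icc_add_eq_lintegral_measure_Icc_sub
    (μ ν : Measure ℝ) [SFinite μ] [SFinite ν] (ε : ℝ) :
    ∫⁻ x, ν (Icc x (x + ε)) ∂μ = ∫⁻ t, μ (Icc (t - ε) t) ∂ν := by
  have hs : MeasurableSet {p : ℝ × ℝ | p.1 ≤ p.2 ∧ p.2 ≤ p.1 + ε} :=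
    (measurableSet_le measurable_fst measurable_snd).inter
      (measurableSet_le measurable_snd (measurable_fst.add_const ε))
  calc ∫⁻ x, ν (Icc x (x + ε)) ∂μ = μ.prod ν {p | p.1 ≤ p.2 ∧ p.2 ≤ p.1 + ε} :=
        (Measure.prod_apply hs).symm
    _ = ∫⁻ t, μ (Icc (t - ε) t) ∂ν := by
        rw [Measure.prod_apply_symm hs]
        congr! 3 with t
        ext x
        simp only [mem_preimage, mem_ofPred_eq, mem_Icc, sub_le_iff_le_add, and_comm]

theorem MeasureTheory.lintegral_measure_Icc_add_le_iSup_mul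
    (μ ν : Measure ℝ) [SFinite μ] [SFinite ν] {a : ℝ} (hμ : μ (Ioi a)ᶜ = 0) (ε : ℝ) :
    ∫⁻ x, ν (Icc x (x + ε)) ∂μ ≤ (⨆ E, μ (Icc (E - ε) (E + ε))) * ν (Ioi a) := by
  rw [lintegral_measure_Icc_add_eq_lintegral_measure_Icc_sub,
    ← lintegral_indicator_const measurableSet_Ioi]
  refine lintegral_mono fun t => ?_
  by_cases ht : t ∈ Ioi a
  · rw [indicator_of_mem ht]
    have hsub : Icc (t - ε) t ⊆ Icc (t - ε) (t + ε) := fun x hx =>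
      ⟨hx.1, by linarith [hx.1, hx.2]⟩
    exact (measure_mono hsub).trans (le_iSup (fun E => μ (Icc (E - ε) (E + ε))) t)
  · rw [indicator_of_notMem ht]
    have hsub : Icc (t - ε) t ⊆ (Ioi a)ᶜ := fun x hx hxa => ht (lt_of_lt_of_le hxa hx.2)
    exact (measure_mono hsub).trans hμ.le

namespace Monotone

theorem ofReal_sub_le_measure_Icc {f : ℝ → ℝ} (hf : Monotone f) (x y : ℝ) :
    ENNReal.ofReal (f y - f x) ≤ hf.stieltjesFunction.measure (Icc x y) := by
  have hleft : Function.leftLim hf.stieltjesFunction x = Function.leftLim f x :=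
    leftLim_rightLim (hf.tendsto_leftLim x)
  rw [StieltjesFunction.measure_Icc, hleft, hf.stieltjesFunction_eq]
  exact ENNReal.ofReal_le_ofReal (sub_le_sub (hf.le_rightLim le_rfl) (hf.leftLim_le le_rfl))

theorem measure_Ioi_le_ofReal_sub {f : ℝ → ℝ} (hf : Monotone f) {l : ℝ}
    (hl : Tendsto f atTop (𝓝 l)) (a : ℝ) :
    hf.stieltjesFunction.measure (Ioi a) ≤ ENNReal.ofReal (l - f a) := by
  rw [StieltjesFunction.measure_Ioi _ (tendsto_rightLim_atTop_of_tendsto hl),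
    hf.stieltjesFunction_eq]
  exact ENNReal.ofReal_le_ofReal (sub_le_sub_left (hf.le_rightLim le_rfl) l)

theorem lintegral_ofReal_sub_le_iSup_mul {f : ℝ → ℝ} (hf : Monotone f) {l : ℝ}
    (hl : Tendsto f atTop (𝓝 l)) (μ : Measure ℝ) [SFinite μ] {a : ℝ} (hμ : μ (Ioi a)ᶜ = 0)
    (ε : ℝ) :
    ∫⁻ x, ENNReal.ofReal (f (x + ε) - f x) ∂μ
      ≤ (⨆ E, μ (Icc (E - ε) (E + ε))) * ENNReal.ofReal (l - f a) :=
  calc ∫⁻ x, ENNReal.ofReal (f (x + ε) - f x) ∂μ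
      ≤ ∫⁻ x, hf.stieltjesFunction.measure (Icc x (x + ε)) ∂μ :=
        lintegral_mono fun x => hf.ofReal_sub_le_measure_Icc x (x + ε)
    _ ≤ (⨆ E, μ (Icc (E - ε) (E + ε))) * hf.stieltjesFunction.measure (Ioi a) :=
        lintegral_measure_Icc_add_le_iSup_mul μ _ hμ ε
    _ ≤ (⨆ E, μ (Icc (E - ε) (E + ε))) * ENNReal.ofReal (l - f a) := by
        gcongr
        exact hf.measure_Ioi_le_ofReal_sub hl a

end Monotone

theorem ssf_partial_integration_halfline_general
    (μ : Measure ℝ) [IsProbabilityMeasure μ] (a : ℝ)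
    (hsupp : μ (Set.Ioi a)ᶜ = 0)
    (φ : ℝ → ℝ) (hmono : Monotone φ) (L : ℝ) (hL : Tendsto φ atTop (nhds L))
    (ε : ℝ) (hε : 0 < ε) :
    ∫ lam, (φ (lam + ε) - φ lam) ∂μ
      ≤ (⨆ E : ℝ, (μ (Set.Icc (E - ε) (E + ε))).toReal) * (L - φ a) := by
  set S := ⨆ E : ℝ, μ (Icc (E - ε) (E + ε))
  have hS : S.toReal = ⨆ E : ℝ, (μ (Icc (E - ε) (E + ε))).toReal :=
    toReal_iSup fun _ => measure_ne_top μ _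
  have hS_ne_top : S ≠ ⊤ := ne_top_of_le_ne_top one_ne_top (iSup_le fun _ => prob_le_one)
  have hφa : 0 ≤ L - φ a := sub_nonneg.2 (hmono.ge_of_tendsto hL a)
  have hnonneg : 0 ≤ᵐ[μ] fun x => φ (x + ε) - φ x :=
    ae_of_all _ fun x => sub_nonneg.2 (hmono (by linarith))
  have hmeas : AEStronglyMeasurable (fun x => φ (x + ε) - φ x) μ :=
    ((hmono.measurable.comp (measurable_add_const ε)).sub hmono.measurable).aestronglyMeasurable
  rw [integral_eq_lintegral_of_nonneg_ae hnonneg hmeas, ← hS]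
  refine toReal_le_of_le_ofReal (mul_nonneg toReal_nonneg hφa) ?_
  rw [ofReal_mul toReal_nonneg, ofReal_toReal hS_ne_top]
  exact hmono.lintegral_ofReal_sub_le_iSup_mul hL μ hsupp ε

/-- Let `μ` be a Borel probability measure on `ℝ` whose support is contained
in `(a,∞)`, let `φ : ℝ → ℝ` be a bounded, nondecreasing, continuously differentiable function,
and let `ε > 0`. Then `∫ (φ(λ+ε) − φ(λ)) dμ(λ) ≤ s(μ,ε) · (L − φ(a))`, where
`L = lim_{x→∞} φ(x)` and `s(μ,ε) = sup_E μ([E−ε,E+ε])`. -/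
theorem ssf_partial_integration_halfline
    (μ : Measure ℝ) [IsProbabilityMeasure μ] (a : ℝ)
    (hsupp : μ (Set.Ioi a)ᶜ = 0)
    (φ : ℝ → ℝ) (hmono : Monotone φ) (hbdd : ∃ M, ∀ x, |φ x| ≤ M)
    (hC1 : ContDiff ℝ 1 φ) (L : ℝ) (hL : Tendsto φ atTop (nhds L))
    (ε : ℝ) (hε : 0 < ε) :
    ∫ lam, (φ (lam + ε) - φ lam) ∂μ
      ≤ (⨆ E : ℝ, (μ (Set.Icc (E - ε) (E + ε))).toReal) * (L - φ a) :=
  ssf_partial_integration_halfline_general μ a hsupp φ hmono L hL ε hε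
end

section
/- For every real t > 0 and every positive integer d, the ratio F_t(x) / (x^{(d−1)/d} · exp(t·x^{1/d})) tends to d/t as x → ∞. -/
open MeasureTheory Real Filter

/-- `F t d x = ∫₀ˣ (exp (t y^(1/d)) − 1) dy`. -/
noncomputable def F (t : ℝ) (d : ℕ) (x : ℝ) : ℝ :=
  ∫ y in (0:ℝ)..x, (Real.exp (t * y ^ ((1:ℝ) / d)) - 1)

/-!
With `a = (d - 1)/d` and `b = 1/d`, the denominator `g x = x^a exp(t x^b)` tends to infinity and
`g' x = (a x^(-b) + t b) exp(t x^b)`, because `a + b = 1`. Since `F' x = exp(t x^b) - 1`, the ratio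
`F'/g'` tends to `1/(t b) = d/t`, and L'Hôpital's rule in its `∞/∞` form at `+∞` transfers this
limit to `F/g`. That rule follows from the monotonicity of `f - c g` when `f' ≤ c g'`: then
`f ≤ c g + O(1)`, and dividing by `g → ∞` gives `limsup f/g ≤ c`.
-/

open Set Topology

lemma isBoundedUnder_le_atTop_of_hasDerivAt_nonpos {h h' : ℝ → ℝ}
    (hh : ∀ᶠ x in atTop, HasDerivAt h (h' x) x) (hh' : ∀ᶠ x in atTop, h' x ≤ 0) :
    IsBoundedUnder (· ≤ ·) atTop h := by
  obtain ⟨B, hB⟩ := eventually_atTop.1 (hh.and hh')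
  have hanti : AntitoneOn h (Ici B) :=
    antitoneOn_of_hasDerivWithinAt_nonpos (convex_Ici B)
      (fun x hx => (hB x hx).1.continuousAt.continuousWithinAt)
      (fun x hx => (hB x (interior_subset hx)).1.hasDerivWithinAt)
      (fun x hx => (hB x (interior_subset hx)).2)
  exact ⟨h B, eventually_map.2 (eventually_atTop.2 ⟨B, fun x hx => hanti (le_refl B) hx hx⟩)⟩

section LHopital

variable {f g f' g' : ℝ → ℝ}

lemma eventually_div_lt_of_deriv_le_mul {c u : ℝ}
    (hf : ∀ᶠ x in atTop, HasDerivAt f (f' x) x) (hg : ∀ᶠ x in atTop, HasDerivAt g (g' x) x)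
    (hfg : ∀ᶠ x in atTop, f' x ≤ c * g' x) (hgtop : Tendsto g atTop atTop) (hcu : c < u) :
    ∀ᶠ x in atTop, f x / g x < u := by
  obtain ⟨C, hC⟩ := isBoundedUnder_le_atTop_of_hasDerivAt_nonpos
    (h := fun x => f x - c * g x) (h' := fun x => f' x - c * g' x)
    (by filter_upwards [hf, hg] with x hfx hgx using hfx.sub (hgx.const_mul c))
    (by filter_upwards [hfg] with x hx using sub_nonpos.2 hx)
  filter_upwards [eventually_map.1 hC, hgtop.eventually_gt_atTop (max 0 (C / (u - c)))]
    with x hCx hgx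
  have hg0 : 0 < g x := (le_max_left _ _).trans_lt hgx
  have hCg : C < (u - c) * g x := (div_lt_iff₀' (sub_pos.2 hcu)).1 ((le_max_right _ _).trans_lt hgx)
  rw [div_lt_iff₀ hg0]
  linarith

lemma eventually_lt_div_of_mul_le_deriv {c l : ℝ}
    (hf : ∀ᶠ x in atTop, HasDerivAt f (f' x) x) (hg : ∀ᶠ x in atTop, HasDerivAt g (g' x) x)
    (hfg : ∀ᶠ x in atTop, c * g' x ≤ f' x) (hgtop : Tendsto g atTop atTop) (hlc : l < c) :
    ∀ᶠ x in atTop, l < f x / g x := by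
  have hneg := eventually_div_lt_of_deriv_le_mul (f := -f) (f' := -f') (c := -c) (u := -l)
    (by filter_upwards [hf] with x hx using hx.neg) hg
    (by filter_upwards [hfg] with x hx; simp only [Pi.neg_apply]; linarith) hgtop (neg_lt_neg hlc)
  filter_upwards [hneg] with x hx
  rw [Pi.neg_apply, neg_div] at hx
  linarith

theorem lhopital_atTop_of_tendsto_atTop {L : ℝ}
    (hf : ∀ᶠ x in atTop, HasDerivAt f (f' x) x) (hg : ∀ᶠ x in atTop, HasDerivAt g (g' x) x)
    (hg' : ∀ᶠ x in atTop, 0 < g' x) (hgtop : Tendsto g atTop atTop)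
    (hratio : Tendsto (fun x => f' x / g' x) atTop (𝓝 L)) :
    Tendsto (fun x => f x / g x) atTop (𝓝 L) := by
  refine tendsto_order.2 ⟨fun l hl => ?_, fun u hu => ?_⟩
  · obtain ⟨c, hlc, hcL⟩ := exists_between hl
    refine eventually_lt_div_of_mul_le_deriv hf hg ?_ hgtop hlc
    filter_upwards [(tendsto_order.1 hratio).1 c hcL, hg'] with x hx hgx
    exact ((lt_div_iff₀ hgx).1 hx).le
  · obtain ⟨c, hLc, hcu⟩ := exists_between hu
    refine eventually_div_lt_of_deriv_le_mul hf hg ?_ hgtop hcu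
    filter_upwards [(tendsto_order.1 hratio).2 c hLc, hg'] with x hx hgx
    exact ((div_lt_iff₀ hgx).1 hx).le

end LHopital

lemma hasDerivAt_F (t : ℝ) (d : ℕ) (x : ℝ) :
    HasDerivAt (F t d) (exp (t * x ^ ((1:ℝ) / d)) - 1) x :=
  ((continuous_const.mul (continuous_rpow_const (by positivity))).rexp.sub
    continuous_const).integral_hasStrictDerivAt 0 x |>.hasDerivAt

section Denominator

variable {a b t x : ℝ}

lemma hasDerivAt_rpow_mul_exp_mul_rpow (hab : a + b = 1) (hx : 0 < x) :
    HasDerivAt (fun x => x ^ a * exp (t * x ^ b)) ((a * x ^ (-b) + t * b) * exp (t * x ^ b)) x := by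
  refine ((hasDerivAt_rpow_const (p := a) (Or.inl hx.ne')).fun_mul
    (((hasDerivAt_rpow_const (p := b) (Or.inl hx.ne')).const_mul t).exp)).congr_deriv ?_
  have hxb : x ^ a * x ^ (b - 1) = 1 := by
    rw [← rpow_add hx, show a + (b - 1) = 0 by linarith, rpow_zero]
  rw [show a - 1 = -b by linarith]
  linear_combination t * b * exp (t * x ^ b) * hxb

lemma tendsto_rpow_mul_exp_mul_rpow_atTop (ha : 0 ≤ a) (hb : 0 < b) (ht : 0 < t) :
    Tendsto (fun x => x ^ a * exp (t * x ^ b)) atTop atTop := by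
  refine tendsto_atTop_mono' atTop ?_
    (tendsto_exp_atTop.comp ((tendsto_rpow_atTop hb).const_mul_atTop ht))
  filter_upwards [eventually_ge_atTop 1] with x hx
  exact le_mul_of_one_le_left (exp_pos _).le (one_le_rpow hx ha)

lemma tendsto_exp_sub_one_div_atTop (hb : 0 < b) (ht : 0 < t) :
    Tendsto (fun x => (exp (t * x ^ b) - 1) / ((a * x ^ (-b) + t * b) * exp (t * x ^ b)))
      atTop (𝓝 (1 / (t * b))) := by
  have hexp : Tendsto (fun x => 1 - exp (-(t * x ^ b))) atTop (𝓝 (1 - 0)) :=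
    tendsto_const_nhds.sub (tendsto_exp_atBot.comp
      (tendsto_neg_atTop_atBot.comp ((tendsto_rpow_atTop hb).const_mul_atTop ht)))
  have hcoef : Tendsto (fun x => a * x ^ (-b) + t * b) atTop (𝓝 (a * 0 + t * b)) :=
    ((tendsto_rpow_neg_atTop hb).const_mul a).add tendsto_const_nhds
  have hlim := hexp.div hcoef (by simp only [mul_zero, zero_add]; positivity)
  simp only [sub_zero, mul_zero, zero_add] at hlim
  refine hlim.congr fun x => ?_
  rw [Pi.div_apply, exp_neg, mul_comm (a * x ^ (-b) + t * b), ← div_div]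
  congr 1
  rw [sub_div, div_self (exp_pos _).ne', one_div]

end Denominator

/-- For every real `t > 0` and every positive integer `d`, the ratio
`F_t(x) / (x^((d−1)/d) · exp(t·x^(1/d)))` tends to `d/t` as `x → ∞`. -/
theorem F_asymptotics (t : ℝ) (ht : 0 < t) (d : ℕ) (hd : 0 < d) :
    Tendsto (fun x : ℝ =>
        F t d x / (x ^ (((d:ℝ) - 1) / d) * Real.exp (t * x ^ ((1:ℝ) / d))))
      atTop (nhds ((d : ℝ) / t)) := by
  have hd0 : (0:ℝ) < d := Nat.cast_pos.2 hd
  have hab : ((d:ℝ) - 1) / d + 1 / d = 1 := by field_simp; ring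
  have ha : 0 ≤ ((d:ℝ) - 1) / d := div_nonneg (sub_nonneg.2 (Nat.one_le_cast.2 hd)) hd0.le
  have hlim : (1:ℝ) / (t * (1 / d)) = d / t := by field_simp
  rw [← hlim]
  exact lhopital_atTop_of_tendsto_atTop (Eventually.of_forall (hasDerivAt_F t d))
    ((eventually_gt_atTop 0).mono fun x hx => hasDerivAt_rpow_mul_exp_mul_rpow hab hx)
    ((eventually_gt_atTop 0).mono fun x hx => by positivity)
    (tendsto_rpow_mul_exp_mul_rpow_atTop ha (by positivity) ht)
    (tendsto_exp_sub_one_div_atTop (by positivity) ht)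
end

section
/- Let t > 0 be real and d a positive integer. Then for all x ≥ 0 and y ≥ 0, x·y ≤ F_t(x) + y·(log(1+y)/t)^d. In particular, the Legendre transform G(y) := sup_{x ≥ 0} (x·y − F_t(x)) satisfies G(y) ≤ y·(log(1+y)/t)^d for all y ≥ 0. -/
open MeasureTheory Real

/-- Let `t > 0` and `d` a positive integer. Then for all `x ≥ 0`, `y ≥ 0`,
`x·y ≤ F_t(x) + y·(log(1+y)/t)^d`. In particular the Legendre transform
`G(y) = sup_{x ≥ 0} (x·y − F_t(x))` satisfies `G(y) ≤ y·(log(1+y)/t)^d` for all `y ≥ 0`. -/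
theorem young_inequality_for_F (t : ℝ) (ht : 0 < t) (d : ℕ) (hd : 0 < d) :
    (∀ x ≥ (0:ℝ), ∀ y ≥ (0:ℝ),
        x * y ≤ F t d x + y * (Real.log (1 + y) / t) ^ d) ∧
    (∀ y ≥ (0:ℝ),
        (⨆ x : Set.Ici (0:ℝ), ((x : ℝ) * y - F t d x))
          ≤ y * (Real.log (1 + y) / t) ^ d) := by
  have hdc : (0:ℝ) < (d:ℝ) := by exact_mod_cast hd
  have hcont : Continuous (fun z : ℝ => Real.exp (t * z ^ ((1:ℝ)/d)) - 1) := by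
    have h1 : Continuous (fun z : ℝ => z ^ ((1:ℝ)/d)) :=
      Real.continuous_rpow_const (by positivity)
    fun_prop
  have key : ∀ x ≥ (0:ℝ), ∀ y ≥ (0:ℝ),
      x * y ≤ F t d x + y * (Real.log (1 + y) / t) ^ d := by
    intro x hx y hy
    set c : ℝ := Real.log (1 + y) / t with hc
    have hcnn : 0 ≤ c := by
      have : 0 ≤ Real.log (1 + y) := Real.log_nonneg (by linarith)
      positivity
    set x₀ : ℝ := c ^ d with hx0
    have hx0nn : 0 ≤ x₀ := by positivity
    -- x₀^{1/d} = c
    have hroot : x₀ ^ ((1:ℝ)/d) = c := by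
      rw [hx0, ← Real.rpow_natCast c d, ← Real.rpow_mul hcnn]
      rw [mul_one_div, div_self (ne_of_gt hdc), Real.rpow_one]
    -- f(x₀) = y
    have hf0 : Real.exp (t * x₀ ^ ((1:ℝ)/d)) - 1 = y := by
      rw [hroot, hc, mul_div_cancel₀ _ (ne_of_gt ht), Real.exp_log (by linarith)]
      ring
    -- F is nonneg on [0, x₀] etc: integrand nonneg for z ≥ 0
    have hfnn : ∀ z : ℝ, 0 ≤ z → 0 ≤ Real.exp (t * z ^ ((1:ℝ)/d)) - 1 := by
      intro z hz
      have : (1:ℝ) ≤ Real.exp (t * z ^ ((1:ℝ)/d)) := by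
        rw [Real.one_le_exp_iff]
        positivity
      linarith
    have hFnn : ∀ a : ℝ, 0 ≤ a → 0 ≤ F t d a := by
      intro a ha
      apply intervalIntegral.integral_nonneg ha
      intro u hu
      exact hfnn u hu.1
    rcases le_total x x₀ with hle | hle
    · have h1 : x * y ≤ x₀ * y := mul_le_mul_of_nonneg_right hle hy
      have h2 := hFnn x hx
      nlinarith [hFnn x hx]
    · -- x ≥ x₀ : F x ≥ F x₀ + ∫_{x₀}^x f ≥ (x - x₀) * y
      have hint : IntervalIntegrable (fun z : ℝ => Real.exp (t * z ^ ((1:ℝ)/d)) - 1)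
          volume x₀ x := hcont.intervalIntegrable _ _
      have hsplit : F t d x = F t d x₀ + ∫ z in x₀..x,
          (Real.exp (t * z ^ ((1:ℝ)/d)) - 1) := by
        rw [F, F, ← intervalIntegral.integral_add_adjacent_intervals
          (hcont.intervalIntegrable _ _) hint]
      have hmono : ∀ z ∈ Set.Icc x₀ x, y ≤ Real.exp (t * z ^ ((1:ℝ)/d)) - 1 := by
        intro z hz
        have hz0 : 0 ≤ z := le_trans hx0nn hz.1
        have : x₀ ^ ((1:ℝ)/d) ≤ z ^ ((1:ℝ)/d) :=
          Real.rpow_le_rpow hx0nn hz.1 (by positivity)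
        have : t * x₀ ^ ((1:ℝ)/d) ≤ t * z ^ ((1:ℝ)/d) :=
          mul_le_mul_of_nonneg_left this ht.le
        have h3 := Real.exp_le_exp.2 this
        linarith [hf0, h3]
      have hlow : (x - x₀) * y ≤ ∫ z in x₀..x,
          (Real.exp (t * z ^ ((1:ℝ)/d)) - 1) := by
        have := intervalIntegral.integral_mono_on hle
          (intervalIntegrable_const (c := y)) hint hmono
        simpa [smul_eq_mul, mul_comm] using this
      have := hFnn x₀ hx0nn
      nlinarith
  refine ⟨key, fun y hy => ?_⟩
  apply ciSup_le
  rintro ⟨x, hx⟩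
  have := key x hx y hy
  simp only [Set.mem_Ici] at hx
  linarith [key x hx y hy]
end

section
/- Let t > 0 be real, d a positive integer, and K ≥ 0. Let ξ : ℝ → ℝ be Lebesgue measurable and suppose that ∫_{(−∞,T]} F_t(|ξ(λ)|) dλ ≤ K·e^T for every real T. Let f : ℝ → [0,∞) be measurable, bounded, Lebesgue integrable, and vanishing outside (−∞, b] for some real b. Then the product f·ξ is Lebesgue integrable and ∫_ℝ f(λ)·ξ(λ) dλ ≤ K·e^b + t^{−d} · (log(1 + ‖f‖_∞))^d · ‖f‖_1, where ‖f‖_∞ is the essential supremum of f and ‖f‖_1 = ∫ f. -/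
/-!
For `s, x ≥ 0` Young's inequality for the increasing function `y ↦ exp (t y^(1/d)) - 1`, whose
value at `a = (log (1 + s) / t)^d` is `s`, gives `s x ≤ F_t(x) + s a`. Applied with `s = f(λ)`,
`x = |ξ(λ)|` and bounding `f(λ) ≤ ‖f‖_∞` inside the logarithm, this dominates `f ξ` by
`1_{(-∞, b]} F_t(|ξ|) + (log (1 + ‖f‖_∞) / t)^d f`, whose integral is at most
`K e^b + t^{-d} (log (1 + ‖f‖_∞))^d ‖f‖₁`.
-/

open MeasureTheory Real

open Set

lemma mul_le_intervalIntegral_add_mul {g : ℝ → ℝ} (hg_mono : MonotoneOn g (Ici 0))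
    (hg_nonneg : ∀ y, 0 ≤ y → 0 ≤ g y) {a x : ℝ} (ha : 0 ≤ a) (hx : 0 ≤ x) :
    g a * x ≤ (∫ y in (0:ℝ)..x, g y) + g a * a := by
  have hint : ∀ p q, 0 ≤ p → 0 ≤ q → IntervalIntegrable g volume p q := fun p q hp hq =>
    (hg_mono.mono fun y hy => le_trans (le_min hp hq) hy.1).intervalIntegrable
  have hga := hg_nonneg a ha
  rcases le_total x a with hxa | hax
  · have : 0 ≤ ∫ y in (0:ℝ)..x, g y :=
      intervalIntegral.integral_nonneg hx fun y hy => hg_nonneg y hy.1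
    nlinarith [mul_le_mul_of_nonneg_left hxa hga]
  · have hhead : 0 ≤ ∫ y in (0:ℝ)..a, g y :=
      intervalIntegral.integral_nonneg ha fun y hy => hg_nonneg y hy.1
    have htail : g a * (x - a) ≤ ∫ y in a..x, g y := by
      have := intervalIntegral.integral_mono_on hax intervalIntegrable_const (hint a x ha hx)
        fun y hy => hg_mono (mem_Ici.2 ha) (mem_Ici.2 (ha.trans hy.1)) hy.1
      rwa [intervalIntegral.integral_const, smul_eq_mul, mul_comm] at this
    rw [← intervalIntegral.integral_add_adjacent_intervals (hint 0 a le_rfl ha) (hint a x ha hx)]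
    linarith

section F

variable {t : ℝ} {d : ℕ}

lemma monotoneOn_exp_mul_rpow_sub_one (ht : 0 ≤ t) :
    MonotoneOn (fun y : ℝ => exp (t * y ^ ((1:ℝ) / d)) - 1) (Ici 0) :=
  fun _ hx _ _ hxy => by
    dsimp only
    gcongr

lemma exp_mul_rpow_sub_one_nonneg (ht : 0 ≤ t) {y : ℝ} (hy : 0 ≤ y) :
    0 ≤ exp (t * y ^ ((1:ℝ) / d)) - 1 :=
  sub_nonneg.2 (one_le_exp (mul_nonneg ht (rpow_nonneg hy _)))

lemma F_nonneg (ht : 0 ≤ t) {x : ℝ} (hx : 0 ≤ x) : 0 ≤ F t d x :=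
  intervalIntegral.integral_nonneg hx fun _ hy => exp_mul_rpow_sub_one_nonneg ht hy.1

lemma continuous_F (t : ℝ) (d : ℕ) : Continuous (F t d) :=
  intervalIntegral.continuous_primitive (fun _ _ => Continuous.intervalIntegrable
    (by fun_prop (disch := positivity) : Continuous fun y : ℝ => exp (t * y ^ ((1:ℝ) / d)) - 1)
    _ _) 0

lemma mul_le_F_add (ht : 0 < t) (hd : d ≠ 0) {s x : ℝ} (hs : 0 ≤ s) (hx : 0 ≤ x) :
    s * x ≤ F t d x + s * (log (1 + s) / t) ^ d := by
  have hc : 0 ≤ log (1 + s) / t := div_nonneg (log_nonneg (by linarith)) ht.le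
  have hval : exp (t * ((log (1 + s) / t) ^ d) ^ ((1:ℝ) / d)) - 1 = s := by
    rw [one_div, pow_rpow_inv_natCast hc hd, mul_div_cancel₀ _ ht.ne', exp_log (by linarith)]
    ring
  have := mul_le_intervalIntegral_add_mul (monotoneOn_exp_mul_rpow_sub_one (d := d) ht.le)
    (fun _ => exp_mul_rpow_sub_one_nonneg ht.le) (pow_nonneg hc d) hx
  rwa [hval] at this

lemma mul_le_F_add_of_le (ht : 0 < t) (hd : d ≠ 0) {s N x : ℝ} (hs : 0 ≤ s) (hsN : s ≤ N)
    (hx : 0 ≤ x) : s * x ≤ F t d x + (log (1 + N) / t) ^ d * s := by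
  have hlog : (log (1 + s) / t) ^ d ≤ (log (1 + N) / t) ^ d := by
    gcongr
    exact div_nonneg (log_nonneg (by linarith)) ht.le
  nlinarith [mul_le_F_add ht hd hs hx, mul_le_mul_of_nonneg_left hlog hs]

end F

section Integration

variable {α : Type*} [MeasurableSpace α] {μ : Measure α}

lemma integrable_and_integral_le_of_lintegral_ofReal_le {g : α → ℝ} {C : ℝ}
    (hg : AEStronglyMeasurable g μ) (hg_nonneg : 0 ≤ᵐ[μ] g) (hC : 0 ≤ C)
    (hle : ∫⁻ x, ENNReal.ofReal (g x) ∂μ ≤ ENNReal.ofReal C) :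
    Integrable g μ ∧ ∫ x, g x ∂μ ≤ C :=
  ⟨⟨hg, (hasFiniteIntegral_iff_ofReal hg_nonneg).2 (hle.trans_lt ENNReal.ofReal_lt_top)⟩, by
    rw [integral_eq_lintegral_of_nonneg_ae hg_nonneg hg]
    exact ENNReal.toReal_le_of_le_ofReal hC hle⟩

lemma integrable_and_integral_le_of_norm_le {f g : α → ℝ} (hg : Integrable g μ)
    (hf : AEStronglyMeasurable f μ) (hfg : ∀ᵐ x ∂μ, ‖f x‖ ≤ g x) :
    Integrable f μ ∧ ∫ x, f x ∂μ ≤ ∫ x, g x ∂μ :=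
  ⟨hg.mono' hf hfg, integral_mono_ae (hg.mono' hf hfg) hg
    (hfg.mono fun _ hx => (le_abs_self _).trans hx)⟩

lemma ae_le_toReal_eLpNorm_top_of_le {f : α → ℝ} (hf : AEStronglyMeasurable f μ)
    (hf_nonneg : ∀ x, 0 ≤ f x) {M : ℝ} (hM : ∀ x, f x ≤ M) :
    ∀ᵐ x ∂μ, f x ≤ (eLpNorm f ⊤ μ).toReal := by
  have hf_top : MemLp f ⊤ μ := memLp_top_of_bound hf M
    (ae_of_all _ fun x => (norm_of_nonneg (hf_nonneg x)).trans_le (hM x))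
  filter_upwards [ae_le_lpNorm_exponent_top hf_top] with x hx
  rwa [toReal_eLpNorm hf_top.1, ← norm_of_nonneg (hf_nonneg x)]

end Integration

theorem ssf_duality_bound_general (t : ℝ) (ht : 0 < t) (d : ℕ) (hd : 0 < d)
    (K : ℝ) (hK : 0 ≤ K) (ξ : ℝ → ℝ) (hξ : Measurable ξ)
    (hξint : ∀ T : ℝ,
      ∫⁻ lam in Set.Iic T, ENNReal.ofReal (F t d |ξ lam|)
        ≤ ENNReal.ofReal (K * Real.exp T))
    (f : ℝ → ℝ) (hfnonneg : ∀ lam, 0 ≤ f lam)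
    (hfbdd : ∃ M : ℝ, ∀ lam, f lam ≤ M) (hfint : Integrable f)
    (b : ℝ) (hfsupp : ∀ lam, b < lam → f lam = 0) :
    Integrable (fun lam => f lam * ξ lam) ∧
    ∫ lam, f lam * ξ lam
      ≤ K * Real.exp b
        + (Real.log (1 + (eLpNorm f ⊤ volume).toReal)) ^ d / t ^ d
          * ∫ lam, f lam := by
  obtain ⟨M, hM⟩ := hfbdd
  set c := (log (1 + (eLpNorm f ⊤ volume).toReal) / t) ^ d with hc
  set G := (Iic b).indicator fun lam => F t d |ξ lam| with hG
  have hfN := ae_le_toReal_eLpNorm_top_of_le hfint.1 hfnonneg hM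
  obtain ⟨hF_int, hF_le⟩ : IntegrableOn (fun lam => F t d |ξ lam|) (Iic b) volume ∧
      ∫ lam in Iic b, F t d |ξ lam| ≤ K * exp b :=
    integrable_and_integral_le_of_lintegral_ofReal_le (g := fun lam => F t d |ξ lam|)
    ((continuous_F t d).measurable.comp hξ.abs).aestronglyMeasurable
    (ae_of_all _ fun _ => F_nonneg ht.le (abs_nonneg _)) (by positivity) (hξint b)
  have hdom : ∀ᵐ lam, ‖f lam * ξ lam‖ ≤ G lam + c * f lam := by
    filter_upwards [hfN] with lam hlam
    rw [norm_mul, norm_of_nonneg (hfnonneg lam), norm_eq_abs]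
    rcases le_or_gt lam b with hlb | hbl
    · rw [hG, indicator_of_mem (mem_Iic.2 hlb)]
      exact mul_le_F_add_of_le ht hd.ne' (hfnonneg lam) hlam (abs_nonneg _)
    · rw [hG, hfsupp lam hbl, indicator_of_notMem (notMem_Iic.2 hbl)]
      simp
  have hG_int : Integrable G := hF_int.integrable_indicator measurableSet_Iic
  obtain ⟨hprod_int, hprod_le⟩ := integrable_and_integral_le_of_norm_le
    (g := fun lam => G lam + c * f lam) (hG_int.add (hfint.const_mul c))
    (hfint.1.mul hξ.aestronglyMeasurable) hdom
  refine ⟨hprod_int, hprod_le.trans ?_⟩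
  rw [integral_add hG_int (hfint.const_mul c), integral_indicator measurableSet_Iic,
    integral_const_mul, hc, div_pow]
  gcongr

/-- Let `t > 0`, `d` a positive integer, `K ≥ 0`. Let `ξ : ℝ → ℝ` be
Lebesgue measurable with `∫_{(−∞,T]} F_t(|ξ(λ)|) dλ ≤ K·e^T` for every real `T`. Let
`f : ℝ → [0,∞)` be measurable, bounded, Lebesgue integrable and vanishing outside
`(−∞,b]`. Then `f·ξ` is Lebesgue integrable and
`∫ f(λ)·ξ(λ) dλ ≤ K·e^b + t^{−d}·(log(1+‖f‖_∞))^d·‖f‖₁`. -/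
theorem ssf_duality_bound (t : ℝ) (ht : 0 < t) (d : ℕ) (hd : 0 < d)
    (K : ℝ) (hK : 0 ≤ K) (ξ : ℝ → ℝ) (hξ : Measurable ξ)
    (hξint : ∀ T : ℝ,
      ∫⁻ lam in Set.Iic T, ENNReal.ofReal (F t d |ξ lam|)
        ≤ ENNReal.ofReal (K * Real.exp T))
    (f : ℝ → ℝ) (hfmeas : Measurable f) (hfnonneg : ∀ lam, 0 ≤ f lam)
    (hfbdd : ∃ M : ℝ, ∀ lam, f lam ≤ M) (hfint : Integrable f)
    (b : ℝ) (hfsupp : ∀ lam, b < lam → f lam = 0) :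
    Integrable (fun lam => f lam * ξ lam) ∧
    ∫ lam, f lam * ξ lam
      ≤ K * Real.exp b
        + (Real.log (1 + (eLpNorm f ⊤ volume).toReal)) ^ d / t ^ d
          * ∫ lam, f lam :=
  ssf_duality_bound_general t ht d hd K hK ξ hξ hξint f hfnonneg hfbdd hfint b hfsupp
end

section
/- Let d be a positive integer, δ ∈ [0,1), C ∈ ℝ, V > 0, and let (E_n)_{n≥1} be a nondecreasing sequence of real numbers. Suppose that for every t > 0 the sum ∑_{n=1}^∞ exp(−2t·E_n), taken in [0,∞], satisfies ∑_{n=1}^∞ exp(−2t·E_n) ≤ V · e^{2tC} · (8π(1−δ)t)^{−d/2}. Then for every n ≥ 1, E_n ≥ (2π(1−δ)d/e) · (n/V)^{2/d} − C. -/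
open MeasureTheory Real

/-! Since `E` is nondecreasing, the first `n + 1` terms of the heat trace are each at least
`exp (-2 t E n)`, so `(n + 1) exp (-2 t E n) ≤ V e^{2tC} (a t)^{-d/2}` with `a = 8π(1 - δ)`,
for every `t > 0`. Taking logarithms, `E n + C ≥ (log ((n + 1) / V) + (d/2) log (a t)) / (2t)`,
and the choice `t = e / (a ((n + 1) / V)^{2/d})`, which maximises the right-hand side, gives
the bound. -/

theorem Antitone.succ_mul_le_tsum {f : ℕ → ENNReal} (hf : Antitone f) (n : ℕ) :
    (n + 1) * f n ≤ ∑' k, f k :=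
  calc (n + 1) * f n = ∑ _k ∈ Finset.range (n + 1), f n := by simp
    _ ≤ ∑ k ∈ Finset.range (n + 1), f k :=
      Finset.sum_le_sum fun _k hk => hf (Finset.mem_range_succ_iff.mp hk)
    _ ≤ ∑' k, f k := ENNReal.sum_le_tsum _

theorem succ_mul_exp_le_of_tsum_exp_le {E : ℕ → ℝ} (hE : Monotone E) {c R : ℝ} (hc : c ≤ 0)
    (hR : 0 ≤ R) (hsum : ∑' k, ENNReal.ofReal (exp (c * E k)) ≤ ENNReal.ofReal R) (n : ℕ) :
    (n + 1) * exp (c * E n) ≤ R := by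
  have hanti : Antitone fun k => ENNReal.ofReal (exp (c * E k)) := fun i j hij =>
    ENNReal.ofReal_le_ofReal <| exp_le_exp.mpr <| by nlinarith [hE hij]
  rw [← ENNReal.ofReal_le_ofReal_iff hR, ENNReal.ofReal_mul (by positivity)]
  exact_mod_cast (hanti.succ_mul_le_tsum n).trans hsum

theorem le_of_forall_mul_exp_le_rpow {a N s x C : ℝ} (ha : 0 < a) (hN : 0 < N) (hs : s ≠ 0)
    (h : ∀ t : ℝ, 0 < t → N * exp (-2 * t * x) ≤ exp (2 * t * C) * (a * t) ^ (-s)) :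
    a * s * N ^ (1 / s) / (2 * exp 1) - C ≤ x := by
  set M := N ^ (1 / s)
  have hM : 0 < M := rpow_pos_of_pos hN _
  set t := exp 1 / (a * M) with ht_def
  have ht : 0 < t := by positivity
  have hpow : (a * t) ^ (-s) = N * exp (-s) := by
    have hM_rpow : M ^ s = N := by rw [← rpow_mul hN.le, one_div_mul_cancel hs, rpow_one]
    have hat : a * t = exp 1 / M := by rw [ht_def]; field_simp
    rw [hat, div_rpow (exp_pos 1).le hM.le, exp_one_rpow, rpow_neg hM.le, hM_rpow, exp_neg]
    field_simp
  have hexp : exp (-2 * t * x) ≤ exp (2 * t * C + -s) := by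
    refine le_of_mul_le_mul_left ?_ hN
    calc N * exp (-2 * t * x) ≤ exp (2 * t * C) * (a * t) ^ (-s) := h t ht
      _ = N * exp (2 * t * C + -s) := by rw [hpow, exp_add]; ring
  have hlin : s / (2 * t) ≤ x + C := by
    rw [div_le_iff₀ (by positivity)]
    linarith [exp_le_exp.mp hexp]
  have ht_eq : s / (2 * t) = a * s * M / (2 * exp 1) := by rw [ht_def]; field_simp
  linarith

/-- (Abstract core of the Weyl-type lower bound, Lemma 2.1.)
Let `d` be a positive integer, `δ ∈ [0,1)`, `C ∈ ℝ`, `V > 0` and `(E_n)` a nondecreasing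
sequence of reals (here indexed by `n : ℕ`, corresponding to `E_{n+1}` in 1-based indexing).
If for every `t > 0` one has `∑_n exp(−2t·E_n) ≤ V·e^{2tC}·(8π(1−δ)t)^{−d/2}` (sum in `[0,∞]`),
then `E_n ≥ (2π(1−δ)d/e)·((n+1)/V)^{2/d} − C` for every `n`. -/
theorem weyl_lower_bound_from_heat_trace (d : ℕ) (hd : 0 < d)
    (δ : ℝ) (hδ : δ ∈ Set.Ico (0:ℝ) 1) (C V : ℝ) (hV : 0 < V)
    (E : ℕ → ℝ) (hE : Monotone E)
    (hsum : ∀ t : ℝ, 0 < t →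
      ∑' n : ℕ, ENNReal.ofReal (Real.exp (-2 * t * E n))
        ≤ ENNReal.ofReal
            (V * Real.exp (2 * t * C) * (8 * Real.pi * (1 - δ) * t) ^ (-(d:ℝ) / 2))) :
    ∀ n : ℕ,
      (2 * Real.pi * (1 - δ) * d / Real.exp 1) * (((n : ℝ) + 1) / V) ^ (2 / (d:ℝ)) - C
        ≤ E n := by
  intro n
  have ha : 0 < 8 * π * (1 - δ) := mul_pos (by positivity) (sub_pos.mpr hδ.2)
  have hs : (d : ℝ) / 2 ≠ 0 := by positivity
  have key := le_of_forall_mul_exp_le_rpow (x := E n) (C := C) ha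
    (div_pos n.cast_add_one_pos hV) hs fun t ht => by
      have := succ_mul_exp_le_of_tsum_exp_le hE (by linarith) (by positivity) (hsum t ht) n
      rw [neg_div] at this
      rw [div_mul_eq_mul_div, div_le_iff₀ hV]
      linarith
  rw [one_div_div] at key
  convert key using 2
  field_simp
  ring
end

section
/- Let A be an n×n Hermitian complex matrix, v ∈ ℂⁿ, and let ρ : ℝ → ℝ be nondecreasing and bounded. Then (i) the function s ↦ ∑_{i=1}^n ρ(λ_i(A + s·v v*)) is nondecreasing on ℝ, and (ii) for all real s ≤ s', ∑_{i=1}^n ρ(λ_i(A + s'·v v*)) − ∑_{i=1}^n ρ(λ_i(A + s·v v*)) ≤ sup ρ − inf ρ. -/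
/-!
Write `N_M(t)` for the number of eigenvalues of a Hermitian matrix `M` exceeding `t`. By the
min–max principle, `N_M(t)` is the largest dimension of a subspace on which
`re ⟪M x, x⟫ > t ‖x‖²` away from `0`. Adding a positive semidefinite matrix keeps such subspaces
admissible, and intersecting one with the kernel of a perturbation of rank `r` costs at most `r`
dimensions; hence `N_A(t) ≤ N_{A + c vv*}(t) ≤ N_A(t) + 1` for `c ≥ 0`. Listed increasingly, the
eigenvalues therefore interlace, `λᵢ ≤ λ'ᵢ ≤ λᵢ₊₁`, and summing `ρ` over these inequalities gives
both claims: in the second, pairing `ρ(λ'ᵢ) ≤ ρ(λᵢ₊₁)` leaves only `ρ(λ'ₙ) - ρ(λ₁) ≤ sup ρ - inf ρ`.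
-/

open Finset Matrix Module RCLike
open scoped ComplexOrder

section Counting

variable {α : Type*} [LinearOrder α] {n : ℕ}

lemma card_filter_lt_comp_perm (f : Fin n → α) (σ : Equiv.Perm (Fin n)) (t : α) :
    #{i | t < f (σ i)} = #{i | t < f i} :=
  card_equiv σ (by simp)

lemma Tuple.sum_comp_sort {β : Type*} [AddCommMonoid β] (ρ : α → β) (f : Fin n → α) :
    ∑ i, ρ ((f ∘ Tuple.sort f) i) = ∑ i, ρ (f i) :=
  Equiv.sum_comp (Tuple.sort f) (fun i => ρ (f i))

lemma Monotone.lt_apply_iff_card_lt {f : Fin n → α} (hf : Monotone f) (t : α) (i : Fin n) :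
    t < f i ↔ n - i ≤ #{j | t < f j} := by
  constructor
  · intro hi
    calc n - (i : ℕ) = #(Ici i) := (Fin.card_Ici i).symm
      _ ≤ #{j | t < f j} := card_le_card fun j hj => by
        simpa using hi.trans_le (hf (mem_Ici.mp hj))
  · intro hcard
    by_contra! hi
    have : #{j | t < f j} ≤ #(Ioi i) := card_le_card fun j hj => by
      simp only [mem_filter, mem_univ, true_and] at hj
      exact mem_Ioi.mpr (lt_of_not_ge fun hji => (hj.trans_le (hf hji)).not_ge hi)
    rw [Fin.card_Ioi] at this
    omega

lemma Monotone.apply_le_apply_of_card_lt_le_add {f g : Fin n → α} (hf : Monotone f)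
    (hg : Monotone g) {k : ℕ} (hfg : ∀ t, #{j | t < g j} ≤ #{j | t < f j} + k) {i j : Fin n}
    (hij : (i : ℕ) + k ≤ j) : g i ≤ f j := by
  by_contra! hlt
  have hg_i := (hg.lt_apply_iff_card_lt (f j) i).mp hlt
  have hf_j := (hf.lt_apply_iff_card_lt (f j) j).not.mp (lt_irrefl _)
  have := hfg (f j)
  omega

theorem sum_le_sum_of_card_lt_le {ρ : α → ℝ} (hρ : Monotone ρ) {f g : Fin n → α}
    (hfg : ∀ t, #{i | t < f i} ≤ #{i | t < g i}) : ∑ i, ρ (f i) ≤ ∑ i, ρ (g i) := by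
  rw [← Tuple.sum_comp_sort ρ f, ← Tuple.sum_comp_sort ρ g]
  set f' := f ∘ Tuple.sort f
  set g' := g ∘ Tuple.sort g
  have hcard t : #{i | t < f' i} ≤ #{i | t < g' i} + 0 := by
    simpa only [f', g', Function.comp_apply, card_filter_lt_comp_perm, add_zero] using hfg t
  exact sum_le_sum fun i _ => hρ <| (Tuple.monotone_sort g).apply_le_apply_of_card_lt_le_add
    (Tuple.monotone_sort f) hcard le_rfl

theorem sum_sub_sum_le_of_card_lt_le_succ {ρ : α → ℝ} (hρ : Monotone ρ)
    (hρ_above : BddAbove (Set.range ρ)) (hρ_below : BddBelow (Set.range ρ)) {f g : Fin n → α}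
    (hfg : ∀ t, #{i | t < g i} ≤ #{i | t < f i} + 1) :
    ∑ i, ρ (g i) - ∑ i, ρ (f i) ≤ sSup (Set.range ρ) - sInf (Set.range ρ) := by
  rw [← Tuple.sum_comp_sort ρ f, ← Tuple.sum_comp_sort ρ g]
  set f' := f ∘ Tuple.sort f
  set g' := g ∘ Tuple.sort g
  have hcard t : #{i | t < g' i} ≤ #{i | t < f' i} + 1 := by
    simpa only [f', g', Function.comp_apply, card_filter_lt_comp_perm] using hfg t
  cases n with
  | zero => simpa using Real.sInf_le_sSup _ hρ_below hρ_above
  | succ m =>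
    have hshift : ∑ i : Fin m, ρ (g' i.castSucc) ≤ ∑ i : Fin m, ρ (f' i.succ) :=
      sum_le_sum fun i _ => hρ <| (Tuple.monotone_sort f).apply_le_apply_of_card_lt_le_add
        (Tuple.monotone_sort g) hcard (by simp)
    have htop : ρ (g' (Fin.last m)) ≤ sSup (Set.range ρ) := le_csSup hρ_above ⟨_, rfl⟩
    have hbot : sInf (Set.range ρ) ≤ ρ (f' 0) := csInf_le hρ_below ⟨_, rfl⟩
    rw [Fin.sum_univ_castSucc (f := fun i => ρ (g' i)),
      Fin.sum_univ_succ (f := fun i => ρ (f' i))]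
    linarith

end Counting

lemma Submodule.finrank_add_finrank_le_finrank_add_finrank_inf {K V : Type*} [DivisionRing K]
    [AddCommGroup V] [Module K V] [FiniteDimensional K V] (s t : Submodule K V) :
    finrank K s + finrank K t ≤ finrank K V + finrank K ↥(s ⊓ t) := by
  rw [← Submodule.finrank_sup_add_finrank_inf_eq]
  exact Nat.add_le_add_right (Submodule.finrank_le _) _

namespace OrthonormalBasis

variable {𝕜 ι E : Type*} [RCLike 𝕜] [NormedAddCommGroup E] [InnerProductSpace 𝕜 E] [Fintype ι]

lemma inner_eq_zero_of_mem_span_image (b : OrthonormalBasis ι 𝕜 E) {S : Set ι} {x : E}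
    (hx : x ∈ Submodule.span 𝕜 (b '' S)) {j : ι} (hj : j ∉ S) : inner 𝕜 (b j) x = 0 := by
  refine Submodule.mem_orthogonal_singleton_iff_inner_right.mp (Submodule.span_le.mpr ?_ hx)
  rintro _ ⟨i, hi, rfl⟩
  exact Submodule.mem_orthogonal_singleton_iff_inner_right.mpr
    (b.orthonormal.inner_eq_zero (ne_of_mem_of_not_mem hi hj).symm)

lemma finrank_span_image (b : OrthonormalBasis ι 𝕜 E) (S : Finset ι) :
    finrank 𝕜 (Submodule.span 𝕜 (b '' S)) = #S := by
  rw [Set.image_eq_range, ← Fintype.card_coe,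
    ← finrank_span_eq_card (b.orthonormal.linearIndependent.comp _ Subtype.val_injective)]
  rfl

end OrthonormalBasis

namespace Matrix.IsHermitian

variable {𝕜 ι : Type*} [RCLike 𝕜] [Fintype ι] [DecidableEq ι] {A B : Matrix ι ι 𝕜}

local notation "⟪" x ", " y "⟫" => inner 𝕜 x y

lemma toEuclideanLin_eigenvectorBasis (hA : A.IsHermitian) (i : ι) :
    toEuclideanLin A (hA.eigenvectorBasis i) = (hA.eigenvalues i : 𝕜) • hA.eigenvectorBasis i := by
  ext1
  rw [ofLp_toLpLin, toLin'_apply, hA.mulVec_eigenvectorBasis, WithLp.ofLp_smul,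
    RCLike.real_smul_eq_coe_smul (K := 𝕜)]

lemma re_inner_toEuclideanLin_self (hA : A.IsHermitian) (x : EuclideanSpace 𝕜 ι) :
    re ⟪toEuclideanLin A x, x⟫ =
      ∑ i, hA.eigenvalues i * ‖⟪hA.eigenvectorBasis i, x⟫‖ ^ 2 := by
  have hsymm := isSymmetric_toEuclideanLin_iff.mpr hA
  rw [← hA.eigenvectorBasis.sum_inner_mul_inner, map_sum]
  refine sum_congr rfl fun i _ => ?_
  rw [hsymm, toEuclideanLin_eigenvectorBasis, inner_smul_right, ← inner_conj_symm,
    mul_assoc, RCLike.conj_mul, ← RCLike.ofReal_pow, ← RCLike.ofReal_mul, RCLike.ofReal_re]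

lemma re_inner_toEuclideanLin_self_le (hA : A.IsHermitian) {S : Set ι} {t : ℝ}
    (hS : ∀ i ∈ S, hA.eigenvalues i ≤ t) {x : EuclideanSpace 𝕜 ι}
    (hx : x ∈ Submodule.span 𝕜 (hA.eigenvectorBasis '' S)) :
    re ⟪toEuclideanLin A x, x⟫ ≤ t * ‖x‖ ^ 2 := by
  rw [re_inner_toEuclideanLin_self, ← hA.eigenvectorBasis.sum_sq_norm_inner_right, mul_sum]
  refine sum_le_sum fun i _ => ?_
  by_cases hi : i ∈ S
  · exact mul_le_mul_of_nonneg_right (hS i hi) (sq_nonneg _)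
  · simp [hA.eigenvectorBasis.inner_eq_zero_of_mem_span_image hx hi]

lemma lt_re_inner_toEuclideanLin_self (hA : A.IsHermitian) {S : Set ι} {t : ℝ}
    (hS : ∀ i ∈ S, t < hA.eigenvalues i) {x : EuclideanSpace 𝕜 ι}
    (hx : x ∈ Submodule.span 𝕜 (hA.eigenvectorBasis '' S)) (hx0 : x ≠ 0) :
    t * ‖x‖ ^ 2 < re ⟪toEuclideanLin A x, x⟫ := by
  have hnorm := hA.eigenvectorBasis.sum_sq_norm_inner_right x
  obtain ⟨j, hj⟩ : ∃ j, ⟪hA.eigenvectorBasis j, x⟫ ≠ 0 := by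
    by_contra! h
    exact hx0 (by simpa [h] using hnorm.symm)
  have hjS : j ∈ S := by
    by_contra hjS
    exact hj (hA.eigenvectorBasis.inner_eq_zero_of_mem_span_image hx hjS)
  rw [re_inner_toEuclideanLin_self, ← hnorm, mul_sum]
  refine sum_lt_sum (fun i _ => ?_) ⟨j, mem_univ _, ?_⟩
  · by_cases hi : i ∈ S
    · exact mul_le_mul_of_nonneg_right (hS i hi).le (sq_nonneg _)
    · simp [hA.eigenvectorBasis.inner_eq_zero_of_mem_span_image hx hi]
  · exact mul_lt_mul_of_pos_right (hS j hjS) (by positivity)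

theorem finrank_le_card_eigenvalues_gt (hA : A.IsHermitian) {t : ℝ}
    {W : Submodule 𝕜 (EuclideanSpace 𝕜 ι)}
    (hW : ∀ x ∈ W, x ≠ 0 → t * ‖x‖ ^ 2 < re ⟪toEuclideanLin A x, x⟫) :
    finrank 𝕜 W ≤ #{i | t < hA.eigenvalues i} := by
  let S : Finset ι := {i | ¬t < hA.eigenvalues i}
  have hdisj : Disjoint W (Submodule.span 𝕜 (hA.eigenvectorBasis '' S)) := by
    refine Submodule.disjoint_def.mpr fun x hxW hxS => ?_
    by_contra hx0
    refine (hW x hxW hx0).not_ge (hA.re_inner_toEuclideanLin_self_le (fun i hi => ?_) hxS)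
    simpa [S] using hi
  have hdim := Submodule.finrank_add_finrank_le_of_disjoint hdisj
  have hsplit : #{i | t < hA.eigenvalues i} + #S = Fintype.card ι := by
    rw [← card_univ]
    exact card_filter_add_card_filter_not _
  rw [hA.eigenvectorBasis.finrank_span_image, finrank_euclideanSpace] at hdim
  omega

theorem card_eigenvalues_gt_le_of_posSemidef_sub (hA : A.IsHermitian) (hB : B.IsHermitian)
    (hAB : (B - A).PosSemidef) (t : ℝ) :
    #{i | t < hA.eigenvalues i} ≤ #{i | t < hB.eigenvalues i} := by
  rw [← hA.eigenvectorBasis.finrank_span_image]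
  refine hB.finrank_le_card_eigenvalues_gt fun x hx hx0 => ?_
  have hle := (isPositive_toEuclideanLin_iff.mpr hAB).2 x
  rw [map_sub, LinearMap.sub_apply, inner_sub_left, map_sub, sub_nonneg] at hle
  exact (hA.lt_re_inner_toEuclideanLin_self (fun i hi => by simpa using hi) hx hx0).trans_le hle

theorem card_eigenvalues_gt_le_add_rank (hA : A.IsHermitian) (hB : B.IsHermitian) (t : ℝ) :
    #{i | t < hB.eigenvalues i} ≤ #{i | t < hA.eigenvalues i} + (B - A).rank := by
  let V := Submodule.span 𝕜 (hB.eigenvectorBasis '' ({i | t < hB.eigenvalues i} : Finset ι))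
  let K := LinearMap.ker (toEuclideanLin (B - A))
  have hK : (B - A).rank + finrank 𝕜 K = Fintype.card ι := by
    rw [rank_eq_finrank_range_toLin (B - A) (PiLp.basisFun 2 𝕜 ι) (PiLp.basisFun 2 𝕜 ι),
      ← toLpLin_eq_toLin, LinearMap.finrank_range_add_finrank_ker, finrank_euclideanSpace]
  have hVK : finrank 𝕜 ↥(V ⊓ K) ≤ #{i | t < hA.eigenvalues i} := by
    refine hA.finrank_le_card_eigenvalues_gt fun x hx hx0 => ?_
    have hAB : toEuclideanLin A x = toEuclideanLin B x := by
      have hxK : x ∈ K := hx.2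
      rw [LinearMap.mem_ker, map_sub, LinearMap.sub_apply, sub_eq_zero] at hxK
      exact hxK.symm
    rw [hAB]
    exact hB.lt_re_inner_toEuclideanLin_self (fun i hi => by simpa using hi) hx.1 hx0
  have hdim := Submodule.finrank_add_finrank_le_finrank_add_finrank_inf V K
  rw [hB.eigenvectorBasis.finrank_span_image, finrank_euclideanSpace] at hdim
  omega

end Matrix.IsHermitian

/-- Let `A` be an `n×n` Hermitian complex matrix, `v ∈ ℂⁿ`, and
`ρ : ℝ → ℝ` nondecreasing and bounded. Then (i) `s ↦ ∑ᵢ ρ(λᵢ(A + s·vv*))` is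
nondecreasing on `ℝ`, and (ii) for all `s ≤ s'`,
`∑ᵢ ρ(λᵢ(A + s'·vv*)) − ∑ᵢ ρ(λᵢ(A + s·vv*)) ≤ sup ρ − inf ρ`. -/
theorem monotone_rank_one_trace (n : ℕ) (A : Matrix (Fin n) (Fin n) ℂ) (v : Fin n → ℂ)
    (hH : ∀ s : ℝ, (A + (s : ℂ) • Matrix.vecMulVec v (star v)).IsHermitian)
    (ρ : ℝ → ℝ) (hmono : Monotone ρ)
    (hbdd_above : BddAbove (Set.range ρ)) (hbdd_below : BddBelow (Set.range ρ)) :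
    (Monotone fun s : ℝ => ∑ i, ρ ((hH s).eigenvalues i)) ∧
    (∀ s s' : ℝ, s ≤ s' →
      (∑ i, ρ ((hH s').eigenvalues i)) - (∑ i, ρ ((hH s).eigenvalues i))
        ≤ sSup (Set.range ρ) - sInf (Set.range ρ)) := by
  have hdiff (s s' : ℝ) :
      A + (s' : ℂ) • vecMulVec v (star v) - (A + (s : ℂ) • vecMulVec v (star v)) =
        ((s' - s : ℝ) : ℂ) • vecMulVec v (star v) := by
    push_cast
    module
  have hcount_le (s s' : ℝ) (hss' : s ≤ s') (t : ℝ) :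
      #{i | t < (hH s).eigenvalues i} ≤ #{i | t < (hH s').eigenvalues i} := by
    refine (hH s).card_eigenvalues_gt_le_of_posSemidef_sub (hH s') ?_ t
    rw [hdiff]
    exact (posSemidef_vecMulVec_self_star v).smul (Complex.zero_le_real.mpr (sub_nonneg.mpr hss'))
  have hcount_le_succ (s s' t : ℝ) :
      #{i | t < (hH s').eigenvalues i} ≤ #{i | t < (hH s).eigenvalues i} + 1 := by
    have hrank : (A + (s' : ℂ) • vecMulVec v (star v) -
        (A + (s : ℂ) • vecMulVec v (star v))).rank ≤ 1 := by
      rw [hdiff, ← smul_vecMulVec]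
      exact rank_vecMulVec_le _ _
    have := (hH s).card_eigenvalues_gt_le_add_rank (hH s') t
    omega
  exact ⟨fun s s' hss' => sum_le_sum_of_card_lt_le hmono (hcount_le s s' hss'),
    fun s s' _ => sum_sub_sum_le_of_card_lt_le_succ hmono hbdd_above hbdd_below
      (hcount_le_succ s s')⟩
end

section
/- Let Λ be a nonempty finite set, A a Hermitian complex matrix indexed by Λ×Λ, and μ a Borel probability measure on ℝ with compact support. For ω ∈ ℝ^Λ, let H_ω = A + diag(ω), where diag(ω) is the diagonal matrix with entries ω_k. Then for every E ∈ ℝ and every ε > 0, ∫_{ℝ^Λ} #{i : λ_i(H_ω) ∈ [E−ε, E+ε]} dℙ(ω) ≤ |Λ| · s(μ, 4ε), where ℙ = ⊗_{k ∈ Λ} μ is the product measure (i.i.d. coupling constants). -/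
open MeasureTheory Matrix
open scoped Classical ENNReal

open Finset Module Topology

/-!
Let `N(ω, x)` count the eigenvalues `≤ x` of `H_ω = A + diag ω`. By the min-max principle `N` is
antitone in `ω`, a constant shift of the potential shifts the energy, `N(ω + c, x) = N(ω, x - c)`,
and changing one coordinate `ω_k` is a rank-one perturbation, which moves `N` by at most one.
Hence the number of eigenvalues in `[E - ε, E + ε]` is at most `N(ω, E + ε) - N(ω + 4ε, E + ε)`,
which telescopes into `|Λ|` differences, each raising a single coordinate by `δ = 4ε`. As a
function of that coordinate alone such a difference is the indicator of a set lying within `δ` of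
each of its points, so its expectation is at most `s(μ, δ)`.
-/

namespace Matrix

variable {n : Type*} [Fintype n]

noncomputable def quadForm (M : Matrix n n ℂ) (v : n → ℂ) : ℝ :=
  (star v ⬝ᵥ (M *ᵥ v)).re

theorem quadForm_add (M N : Matrix n n ℂ) (v : n → ℂ) :
    quadForm (M + N) v = quadForm M v + quadForm N v := by
  simp [quadForm, add_mulVec, dotProduct_add]

theorem quadForm_conjTranspose_mul_mul (M A : Matrix n n ℂ) (w : n → ℂ) :
    quadForm (Mᴴ * A * M) w = quadForm A (M *ᵥ w) := by
  rw [quadForm, quadForm, ← mulVec_mulVec, ← mulVec_mulVec, dotProduct_mulVec, ← star_mulVec]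

variable [DecidableEq n]

theorem quadForm_diagonal (d : n → ℝ) (v : n → ℂ) :
    quadForm (diagonal fun i => (d i : ℂ)) v = ∑ i, d i * Complex.normSq (v i) := by
  simp only [quadForm, mulVec_diagonal, dotProduct, Pi.star_apply, Complex.re_sum]
  refine sum_congr rfl fun i _ => ?_
  rw [mul_left_comm, Complex.re_ofReal_mul, Complex.star_def, ← Complex.normSq_eq_conj_mul_self,
    Complex.ofReal_re]

theorem quadForm_one (v : n → ℂ) : quadForm 1 v = ∑ i, Complex.normSq (v i) := by
  simpa using quadForm_diagonal (fun _ => 1) v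

namespace IsHermitian

variable {A : Matrix n n ℂ} (hA : A.IsHermitian)

noncomputable def eigenvalueCount (x : ℝ) : ℕ := #{i | hA.eigenvalues i ≤ x}

noncomputable def eigenvectorCoords : (n → ℂ) ≃ₗ[ℂ] (n → ℂ) :=
  UnitaryGroup.toLinearEquiv (star hA.eigenvectorUnitary)

theorem quadForm_sub_eq_sum (x : ℝ) (v : n → ℂ) :
    quadForm A v - x * quadForm 1 v = ∑ i,
      (hA.eigenvalues i - x) * Complex.normSq (hA.eigenvectorCoords v i) := by
  have hU := hA.eigenvectorUnitary.2
  set U : Matrix n n ℂ := (hA.eigenvectorUnitary : Matrix n n ℂ)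
  have hconj (M : Matrix n n ℂ) : quadForm M v = quadForm (Uᴴ * M * U) (star U *ᵥ v) := by
    rw [quadForm_conjTranspose_mul_mul, mulVec_mulVec, mem_unitaryGroup_iff.1 hU, one_mulVec]
  have hdiag : Uᴴ * A * U = diagonal fun i => (hA.eigenvalues i : ℂ) :=
    (Unitary.conjStarAlgAut_star_apply _ _).symm.trans hA.conjStarAlgAut_star_eigenvectorUnitary
  rw [show hA.eigenvectorCoords v = star U *ᵥ v from rfl, hconj A, hconj 1, hdiag,
    Matrix.mul_one, ← star_eq_conjTranspose, mem_unitaryGroup_iff'.1 hU, quadForm_diagonal,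
    quadForm_one, mul_sum, ← sum_sub_distrib]
  exact sum_congr rfl fun i _ => by ring

-- Counting form of Courant-Fischer: `eigenvalueCount x` is the largest dimension of a subspace
-- on which `quadForm A v ≤ x * quadForm 1 v`.
theorem finrank_le_eigenvalueCount {x : ℝ} {V : Submodule ℂ (n → ℂ)}
    (hV : ∀ v ∈ V, quadForm A v ≤ x * quadForm 1 v) :
    finrank ℂ V ≤ hA.eigenvalueCount x := by
  let ψ : V →ₗ[ℂ] ({i // hA.eigenvalues i ≤ x} → ℂ) :=
    LinearMap.funLeft ℂ ℂ Subtype.val ∘ₗ hA.eigenvectorCoords.toLinearMap ∘ₗ V.subtype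
  have hψ : Function.Injective ψ := by
    rw [← LinearMap.ker_eq_bot, LinearMap.ker_eq_bot']
    rintro ⟨v, hv⟩ hψv
    have hlow (i : n) (hi : hA.eigenvalues i ≤ x) : hA.eigenvectorCoords v i = 0 :=
      congrFun hψv ⟨i, hi⟩
    have hterm (i : n) :
        0 ≤ (hA.eigenvalues i - x) * Complex.normSq (hA.eigenvectorCoords v i) := by
      rcases le_or_gt (hA.eigenvalues i) x with hi | hi
      · simp [hlow i hi]
      · exact mul_nonneg (sub_nonneg.2 hi.le) (Complex.normSq_nonneg _)
    have hsum : ∑ i, (hA.eigenvalues i - x) * Complex.normSq (hA.eigenvectorCoords v i) = 0 :=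
      le_antisymm (by rw [← hA.quadForm_sub_eq_sum]; linarith [hV v hv])
        (sum_nonneg fun i _ => hterm i)
    have hev : hA.eigenvectorCoords v = 0 := funext fun i => by
      rcases le_or_gt (hA.eigenvalues i) x with hi | hi
      · exact hlow i hi
      · have := (sum_eq_zero_iff_of_nonneg fun i _ => hterm i).1 hsum i (mem_univ i)
        simpa [(sub_pos.2 hi).ne'] using this
    simpa using (map_eq_zero_iff _ hA.eigenvectorCoords.injective).1 hev
  calc finrank ℂ V ≤ finrank ℂ ({i // hA.eigenvalues i ≤ x} → ℂ) :=
        LinearMap.finrank_le_finrank_of_injective hψ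
    _ = hA.eigenvalueCount x := by simp [eigenvalueCount, Fintype.card_subtype]

theorem exists_finrank_eq_eigenvalueCount (x : ℝ) :
    ∃ V : Submodule ℂ (n → ℂ), finrank ℂ V = hA.eigenvalueCount x ∧
      ∀ v ∈ V, quadForm A v ≤ x * quadForm 1 v := by
  let φ : (n → ℂ) →ₗ[ℂ] ({i // x < hA.eigenvalues i} → ℂ) :=
    LinearMap.funLeft ℂ ℂ Subtype.val ∘ₗ hA.eigenvectorCoords.toLinearMap
  refine ⟨LinearMap.ker φ, ?_, fun v hv => ?_⟩
  · have hφ : LinearMap.range φ = ⊤ := LinearMap.range_eq_top.2 <|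
      (LinearMap.funLeft_surjective_of_injective ℂ ℂ _ Subtype.val_injective).comp
        hA.eigenvectorCoords.surjective
    have hrank := LinearMap.finrank_range_add_finrank_ker φ
    rw [hφ, finrank_top, finrank_fintype_fun_eq_card ℂ, finrank_fintype_fun_eq_card ℂ,
      Fintype.card_subtype] at hrank
    have hcard := card_filter_add_card_filter_not (s := univ) (p := fun i => hA.eigenvalues i ≤ x)
    rw [eigenvalueCount]
    simp only [not_le, card_univ] at hcard ⊢
    omega
  · have hhigh (i : n) (hi : x < hA.eigenvalues i) : hA.eigenvectorCoords v i = 0 :=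
      congrFun hv ⟨i, hi⟩
    rw [← sub_nonpos, hA.quadForm_sub_eq_sum]
    refine sum_nonpos fun i _ => ?_
    rcases le_or_gt (hA.eigenvalues i) x with hi | hi
    · exact mul_nonpos_of_nonpos_of_nonneg (sub_nonpos.2 hi) (Complex.normSq_nonneg _)
    · simp [hhigh i hi]

theorem eigenvalueCount_add_finrank_le {B : Matrix n n ℂ} (hB : B.IsHermitian) {x y : ℝ}
    (K : Submodule ℂ (n → ℂ))
    (h : ∀ v ∈ K, quadForm B v - y * quadForm 1 v ≤ quadForm A v - x * quadForm 1 v) :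
    hA.eigenvalueCount x + finrank ℂ K ≤ hB.eigenvalueCount y + Fintype.card n := by
  obtain ⟨V, hVdim, hV⟩ := hA.exists_finrank_eq_eigenvalueCount x
  have hinf : finrank ℂ ↥(V ⊓ K) ≤ hB.eigenvalueCount y :=
    hB.finrank_le_eigenvalueCount fun v hv => by linarith [hV v hv.1, h v hv.2]
  have hsup : finrank ℂ ↥(V ⊔ K) ≤ Fintype.card n :=
    (Submodule.finrank_le _).trans (finrank_fintype_fun_eq_card ℂ).le
  have := Submodule.finrank_sup_add_finrank_inf_eq V K
  omega

theorem eigenvalueCount_le_of_forall {B : Matrix n n ℂ} (hB : B.IsHermitian) {x y : ℝ}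
    (h : ∀ v, quadForm B v - y * quadForm 1 v ≤ quadForm A v - x * quadForm 1 v) :
    hA.eigenvalueCount x ≤ hB.eigenvalueCount y := by
  have := hA.eigenvalueCount_add_finrank_le hB ⊤ fun v _ => h v
  rw [finrank_top, finrank_fintype_fun_eq_card] at this
  omega

theorem eigenvalueCount_le_add_one {B : Matrix n n ℂ} (hB : B.IsHermitian) (x : ℝ)
    (f : (n → ℂ) →ₗ[ℂ] ℂ) (h : ∀ v, f v = 0 → quadForm B v ≤ quadForm A v) :
    hA.eigenvalueCount x ≤ hB.eigenvalueCount x + 1 := by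
  have hK := hA.eigenvalueCount_add_finrank_le hB (x := x) (y := x) (LinearMap.ker f)
    fun v hv => by linarith [h v hv]
  have hrank := LinearMap.finrank_range_add_finrank_ker f
  have hrange : finrank ℂ (LinearMap.range f) ≤ 1 :=
    (Submodule.finrank_le _).trans (Module.finrank_self ℂ).le
  rw [finrank_fintype_fun_eq_card ℂ] at hrank
  omega

theorem eigenvalueCount_le_card (x : ℝ) : hA.eigenvalueCount x ≤ Fintype.card n :=
  card_le_univ _

theorem card_filter_mem_Icc_add_eigenvalueCount_le {y a b : ℝ} (hya : y < a) (hyb : y ≤ b) :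
    #{i | hA.eigenvalues i ∈ Set.Icc a b} + hA.eigenvalueCount y ≤ hA.eigenvalueCount b := by
  rw [eigenvalueCount, eigenvalueCount, ← card_union_of_disjoint]
  · refine card_le_card fun i => ?_
    simp only [mem_union, mem_filter, mem_univ, true_and, Set.mem_Icc]
    rintro (⟨-, h⟩ | h) <;> linarith
  · refine disjoint_filter.2 fun i _ h h' => ?_
    linarith [h.1]

theorem exists_eigenvalueCount_add_eq (x : ℝ) :
    ∃ η > 0, hA.eigenvalueCount (x + η) = hA.eigenvalueCount x := by
  have hnear : ∀ᶠ y in 𝓝[>] x, ∀ i, hA.eigenvalues i ≤ y → hA.eigenvalues i ≤ x := by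
    refine Filter.eventually_all.2 fun i => ?_
    rcases le_or_gt (hA.eigenvalues i) x with hi | hi
    · exact Filter.Eventually.of_forall fun _ _ => hi
    · filter_upwards [nhdsWithin_le_nhds (gt_mem_nhds hi)] with y hy hle
      exact absurd hle (not_le.2 hy)
  obtain ⟨y, hy, hxy⟩ := (hnear.and self_mem_nhdsWithin).exists
  refine ⟨y - x, sub_pos.2 hxy, ?_⟩
  rw [add_sub_cancel, eigenvalueCount, eigenvalueCount]
  exact congrArg card (filter_congr fun i _ => ⟨hy i, fun h => h.trans hxy.le⟩)

end IsHermitian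

section Anderson

variable {A : Matrix n n ℂ}
  (hH : ∀ ω : n → ℝ, (A + diagonal fun k => (ω k : ℂ)).IsHermitian)

theorem antitone_eigenvalueCount_add_diagonal (x : ℝ) :
    Antitone fun ω => (hH ω).eigenvalueCount x := by
  intro ω ω' hω
  refine (hH ω').eigenvalueCount_le_of_forall (hH ω) fun v => ?_
  simp only [quadForm_add, quadForm_diagonal]
  have : ∑ i, ω i * Complex.normSq (v i) ≤ ∑ i, ω' i * Complex.normSq (v i) :=
    sum_le_sum fun i _ => mul_le_mul_of_nonneg_right (hω i) (Complex.normSq_nonneg _)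
  linarith

theorem eigenvalueCount_add_diagonal_add_const (ω : n → ℝ) (c x : ℝ) :
    (hH (ω + fun _ => c)).eigenvalueCount x = (hH ω).eigenvalueCount (x - c) := by
  have hshift (v : n → ℂ) :
      quadForm (A + diagonal fun k => ((ω + fun _ => c : n → ℝ) k : ℂ)) v
          - x * quadForm 1 v =
        quadForm (A + diagonal fun k => (ω k : ℂ)) v - (x - c) * quadForm 1 v := by
    simp only [quadForm_add, quadForm_diagonal, quadForm_one, Pi.add_apply, add_mul,
      sum_add_distrib, ← mul_sum]
    ring
  exact le_antisymm ((hH _).eigenvalueCount_le_of_forall _ fun v => (hshift v).ge)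
    ((hH _).eigenvalueCount_le_of_forall _ fun v => (hshift v).le)

theorem eigenvalueCount_add_diagonal_le_add_one {ω ω' : n → ℝ} (k : n)
    (h : ∀ j ≠ k, ω j = ω' j) (x : ℝ) :
    (hH ω).eigenvalueCount x ≤ (hH ω').eigenvalueCount x + 1 := by
  refine (hH ω).eigenvalueCount_le_add_one (hH ω') x (LinearMap.proj k)
    fun v hv => le_of_eq ?_
  simp only [quadForm_add, quadForm_diagonal]
  congr 1
  refine sum_congr rfl fun j _ => ?_
  rcases eq_or_ne j k with rfl | hj
  · simp [show v j = 0 from hv]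
  · rw [h j hj]

theorem upperSemicontinuous_eigenvalueCount_add_diagonal (x : ℝ) :
    UpperSemicontinuous fun ω => (hH ω).eigenvalueCount x := by
  intro ω m hm
  obtain ⟨η, hη, hcount⟩ := (hH ω).exists_eigenvalueCount_add_eq x
  have hnear : ∀ᶠ ω' in 𝓝 ω, (ω + fun _ => -η) ≤ ω' :=
    (Filter.eventually_all.2 fun i => (continuous_apply i).continuousAt.eventually
      (lt_mem_nhds (by simpa using hη))).mono fun _ h i => (h i).le
  filter_upwards [hnear] with ω' hω'
  calc (hH ω').eigenvalueCount x ≤ (hH (ω + fun _ => -η)).eigenvalueCount x :=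
        antitone_eigenvalueCount_add_diagonal hH x hω'
    _ = (hH ω).eigenvalueCount x := by
        rw [eigenvalueCount_add_diagonal_add_const, sub_neg_eq_add, hcount]
    _ < m := hm

end Anderson
end Matrix

namespace MeasureTheory.Measure

noncomputable def modulusOfContinuity (μ : Measure ℝ) (δ : ℝ) : ℝ≥0∞ :=
  ⨆ E, μ (Set.Icc (E - δ) (E + δ))

theorem modulusOfContinuity_ne_top (μ : Measure ℝ) [IsProbabilityMeasure μ] (δ : ℝ) :
    μ.modulusOfContinuity δ ≠ ∞ :=
  ne_top_of_le_ne_top ENNReal.one_ne_top (iSup_le fun _ => prob_le_one)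

end MeasureTheory.Measure

theorem integrable_natCast_of_le {α : Type*} [MeasurableSpace α] (ν : Measure α)
    [IsFiniteMeasure ν] {f : α → ℕ} (hf : Measurable f) {C : ℕ} (hC : ∀ a, f a ≤ C) :
    Integrable (fun a => (f a : ℝ)) ν :=
  .of_bound (measurable_from_nat.comp hf).aestronglyMeasurable C
    (ae_of_all _ fun a => by simpa using hC a)

section Averaging

-- Two drops of `g` over steps of length `δ` occur within `δ` of each other, since an antitone
-- `g` with jumps of at most one cannot drop twice over disjoint steps.
theorem measure_setOf_lt_le_modulusOfContinuity (μ : Measure ℝ) {g : ℝ → ℕ}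
    (hg : Antitone g) (hjump : ∀ s t, g s ≤ g t + 1) (δ : ℝ) :
    μ {t | g (t + δ) < g t} ≤ μ.modulusOfContinuity δ := by
  rcases Set.eq_empty_or_nonempty {t | g (t + δ) < g t} with
    h | ⟨t₀, ht₀ : g (t₀ + δ) < g t₀⟩
  · simp [h]
  refine (measure_mono fun t (ht : g (t + δ) < g t) => ?_).trans
    (le_iSup (fun E => μ (Set.Icc (E - δ) (E + δ))) t₀)
  constructor
  · by_contra! hlt
    have := hg (show t + δ ≤ t₀ by linarith)
    have := hjump t (t₀ + δ)
    omega
  · by_contra! hlt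
    have := hg (show t₀ + δ ≤ t by linarith)
    have := hjump t₀ (t + δ)
    omega

variable {n : Type*} [Fintype n] [DecidableEq n] (μ : Measure ℝ) [IsProbabilityMeasure μ]
  {G : (n → ℝ) → ℕ}

theorem measure_pi_setOf_lt_le_modulusOfContinuity (hG : Measurable G) (hanti : Antitone G)
    (k : n) (hjump : ∀ ω ω', (∀ j ≠ k, ω j = ω' j) → G ω ≤ G ω' + 1) (δ : ℝ) :
    Measure.pi (fun _ => μ) {ω | G (ω + Pi.single k δ) < G ω} ≤
      μ.modulusOfContinuity δ := by
  set D := {ω | G (ω + Pi.single k δ) < G ω}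
  have hD : MeasurableSet D := measurableSet_lt (hG.comp (measurable_id.add_const _)) hG
  have hslice (x : n → ℝ) :
      ∫⁻ t, D.indicator 1 (Function.update x k t) ∂μ ≤ μ.modulusOfContinuity δ := by
    have hshift (t : ℝ) :
        Function.update x k t + Pi.single k δ = Function.update x k (t + δ) := by
      ext j
      rcases eq_or_ne j k with rfl | hj <;> simp [*]
    refine (lintegral_indicator_one_le _).trans ?_
    change μ {t | G (Function.update x k t + Pi.single k δ) < G (Function.update x k t)} ≤ _
    simp only [hshift]
    refine measure_setOf_lt_le_modulusOfContinuity μ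
      (hanti.comp_monotone (Function.update_mono (f := x) (i := k)))
      (fun s t => hjump _ _ fun j hj => ?_) δ
    simp [Function.update_of_ne hj]
  calc Measure.pi (fun _ => μ) D = ∫⁻ ω, D.indicator 1 ω ∂Measure.pi fun _ => μ :=
        (lintegral_indicator_one hD).symm
    _ = (∫⋯∫⁻_univ.erase k, fun x => ∫⁻ t, D.indicator 1 (Function.update x k t) ∂μ
          ∂fun _ => μ) 0 := by
        rw [lintegral_eq_lmarginal_univ 0,
          lmarginal_erase' _ (measurable_one.indicator hD) (mem_univ k)]
    _ ≤ (∫⋯∫⁻_univ.erase k, fun _ => μ.modulusOfContinuity δ ∂fun _ => μ) 0 :=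
        lmarginal_mono hslice 0
    _ = μ.modulusOfContinuity δ := by simp [lmarginal]

theorem integral_sub_add_single_le (hG : Measurable G) {C : ℕ} (hC : ∀ ω, G ω ≤ C)
    (hanti : Antitone G) (k : n)
    (hjump : ∀ ω ω', (∀ j ≠ k, ω j = ω' j) → G ω ≤ G ω' + 1) (δ : ℝ) :
    ∫ ω, ((G ω : ℝ) - G (ω + Pi.single k δ)) ∂Measure.pi (fun _ => μ) ≤
      (μ.modulusOfContinuity δ).toReal := by
  set D := {ω | G (ω + Pi.single k δ) < G ω}
  have hD : MeasurableSet D := measurableSet_lt (hG.comp (measurable_id.add_const _)) hG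
  have hGk : Measurable fun ω : n → ℝ => G (ω + Pi.single k δ) :=
    hG.comp (measurable_id.add_const _)
  have hle (ω : n → ℝ) : (G ω : ℝ) - G (ω + Pi.single k δ) ≤ D.indicator 1 ω := by
    by_cases hω : ω ∈ D
    · have := hjump ω (ω + Pi.single k δ) fun j hj => by simp [hj]
      simp only [Set.indicator_of_mem hω, Pi.one_apply]
      linarith [show (G ω : ℝ) ≤ G (ω + Pi.single k δ) + 1 by exact_mod_cast this]
    · have : G ω ≤ G (ω + Pi.single k δ) := not_lt.1 hω
      simp only [Set.indicator_of_notMem hω]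
      linarith [show (G ω : ℝ) ≤ G (ω + Pi.single k δ) by exact_mod_cast this]
  calc ∫ ω, ((G ω : ℝ) - G (ω + Pi.single k δ)) ∂Measure.pi (fun _ => μ)
      ≤ ∫ ω, D.indicator 1 ω ∂Measure.pi (fun _ => μ) :=
        integral_mono ((integrable_natCast_of_le _ hG hC).sub
          (integrable_natCast_of_le _ hGk fun _ => hC _))
          ((integrable_const 1).indicator hD) hle
    _ = (Measure.pi (fun _ => μ) D).toReal := integral_indicator_one hD
    _ ≤ (μ.modulusOfContinuity δ).toReal :=
        ENNReal.toReal_mono (μ.modulusOfContinuity_ne_top δ)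
          (measure_pi_setOf_lt_le_modulusOfContinuity μ hG hanti k hjump δ)

theorem integral_sub_add_const_le (hG : Measurable G) {C : ℕ} (hC : ∀ ω, G ω ≤ C)
    (hanti : Antitone G) (hjump : ∀ k ω ω', (∀ j ≠ k, ω j = ω' j) → G ω ≤ G ω' + 1)
    (δ : ℝ) :
    ∫ ω, ((G ω : ℝ) - G (ω + fun _ => δ)) ∂Measure.pi (fun _ => μ) ≤
      Fintype.card n * (μ.modulusOfContinuity δ).toReal := by
  set P := Measure.pi fun _ : n => μ
  have hint {f : (n → ℝ) → n → ℝ} (hf : Measurable f) :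
      Integrable (fun ω => (G (f ω) : ℝ)) P :=
    integrable_natCast_of_le _ (hG.comp hf) fun _ => hC _
  have key (S : Finset n) : ∫ ω, ((G ω : ℝ) - G (ω + ∑ k ∈ S, Pi.single k δ)) ∂P ≤
      #S * (μ.modulusOfContinuity δ).toReal := by
    induction S using Finset.induction_on with
    | empty => simp
    | insert k S hk ih =>
      rw [sum_insert hk, card_insert_of_notMem hk, Nat.cast_succ, add_one_mul]
      generalize ∑ k ∈ S, Pi.single k δ = v at ih ⊢
      have hstep := integral_sub_add_single_le μ (G := fun ω => G (ω + v))
        (hG.comp (measurable_add_const v)) (fun _ => hC _)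
        (fun _ _ h => hanti (add_le_add_left h v)) k
        (fun ω ω' h => hjump k _ _ fun j hj => by simp [h j hj]) δ
      have h₁ : Integrable (fun ω => (G ω : ℝ) - G (ω + v)) P :=
        (hint measurable_id).sub (hint (measurable_add_const v))
      have h₂ : Integrable (fun ω => (G (ω + v) : ℝ) - G (ω + Pi.single k δ + v)) P :=
        (hint (measurable_add_const v)).sub
          (hint ((measurable_add_const v).comp (measurable_id.add_const _)))
      calc ∫ ω, ((G ω : ℝ) - G (ω + (Pi.single k δ + v))) ∂P
          = ∫ ω, (((G ω : ℝ) - G (ω + v)) +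
              ((G (ω + v) : ℝ) - G (ω + Pi.single k δ + v))) ∂P := by
            simp_rw [add_assoc, sub_add_sub_cancel]
        _ = ∫ ω, ((G ω : ℝ) - G (ω + v)) ∂P +
              ∫ ω, ((G (ω + v) : ℝ) - G (ω + Pi.single k δ + v)) ∂P := by
            rw [integral_add h₁ h₂]
        _ ≤ _ := add_le_add ih hstep
  simpa [univ_sum_single (fun _ : n => δ)] using key univ

end Averaging

theorem anderson_wegner_estimate_general
    (Λ : Type*) [Fintype Λ] [DecidableEq Λ]
    (A : Matrix Λ Λ ℂ)
    (μ : Measure ℝ) [IsProbabilityMeasure μ]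
    (hH : ∀ ω : Λ → ℝ, (A + Matrix.diagonal fun k => (ω k : ℂ)).IsHermitian)
    (E : ℝ) (ε : ℝ) (hε : 0 < ε) :
    ∫ ω : Λ → ℝ,
        ((Finset.univ.filter fun i =>
            (hH ω).eigenvalues i ∈ Set.Icc (E - ε) (E + ε)).card : ℝ)
        ∂(Measure.pi fun _ : Λ => μ)
      ≤ (Fintype.card Λ : ℝ)
          * ⨆ E' : ℝ, (μ (Set.Icc (E' - 4 * ε) (E' + 4 * ε))).toReal := by
  set F : (Λ → ℝ) → ℕ := fun ω => (hH ω).eigenvalueCount (E + ε)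
  have hF : Measurable F := (upperSemicontinuous_eigenvalueCount_add_diagonal hH _).measurable
  have hFle (ω : Λ → ℝ) : F ω ≤ Fintype.card Λ := (hH ω).eigenvalueCount_le_card _
  have hcount (ω : Λ → ℝ) :
      (#{i | (hH ω).eigenvalues i ∈ Set.Icc (E - ε) (E + ε)} : ℝ) ≤
        F ω - F (ω + fun _ => 4 * ε) := by
    have := (hH ω).card_filter_mem_Icc_add_eigenvalueCount_le (y := E + ε - 4 * ε)
      (a := E - ε) (b := E + ε) (by linarith) (by linarith)
    rw [le_sub_iff_add_le]
    simp only [F, eigenvalueCount_add_diagonal_add_const]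
    exact_mod_cast this
  calc _ ≤ ∫ ω, ((F ω : ℝ) - F (ω + fun _ => 4 * ε)) ∂Measure.pi fun _ => μ :=
        integral_mono_of_nonneg (ae_of_all _ fun _ => by positivity)
          ((integrable_natCast_of_le _ hF hFle).sub
            (integrable_natCast_of_le _ (hF.comp (measurable_add_const _)) fun _ => hFle _))
          (ae_of_all _ hcount)
    _ ≤ Fintype.card Λ * (μ.modulusOfContinuity (4 * ε)).toReal :=
        integral_sub_add_const_le μ hF hFle (antitone_eigenvalueCount_add_diagonal hH _)
          (fun k _ _ h => eigenvalueCount_add_diagonal_le_add_one hH k h _) _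
    _ = _ := by
        rw [Measure.modulusOfContinuity, ENNReal.toReal_iSup fun _ => measure_ne_top _ _]

/-- (Wegner estimate for the finite-volume Anderson model.)
Let `Λ` be a nonempty finite set, `A` a Hermitian complex matrix indexed by `Λ×Λ`, and `μ`
a Borel probability measure on `ℝ` with compact support. For `ω ∈ ℝ^Λ` let
`H_ω = A + diag(ω)`. Then for every `E ∈ ℝ` and `ε > 0`,
`∫ #{i : λᵢ(H_ω) ∈ [E−ε,E+ε]} dℙ(ω) ≤ |Λ| · s(μ,4ε)`,
where `ℙ = ⊗_{k∈Λ} μ` and `s(μ,δ) = sup_E μ([E−δ,E+δ])`. -/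
theorem anderson_wegner_estimate
    (Λ : Type*) [Fintype Λ] [DecidableEq Λ] [Nonempty Λ]
    (A : Matrix Λ Λ ℂ) (hA : A.IsHermitian)
    (μ : Measure ℝ) [IsProbabilityMeasure μ]
    (hcomp : ∃ K : Set ℝ, IsCompact K ∧ μ Kᶜ = 0)
    (hH : ∀ ω : Λ → ℝ, (A + Matrix.diagonal fun k => (ω k : ℂ)).IsHermitian)
    (E : ℝ) (ε : ℝ) (hε : 0 < ε) :
    ∫ ω : Λ → ℝ,
        ((Finset.univ.filter fun i =>
            (hH ω).eigenvalues i ∈ Set.Icc (E - ε) (E + ε)).card : ℝ)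
        ∂(Measure.pi fun _ : Λ => μ)
      ≤ (Fintype.card Λ : ℝ)
          * ⨆ E' : ℝ, (μ (Set.Icc (E' - 4 * ε) (E' + 4 * ε))).toReal :=
  anderson_wegner_estimate_general Λ A μ hH E ε hε
end

section
/- Let d be a positive integer and define g(λ) = (log(1/λ) / log(log(1/λ)))^{d/2} for λ ∈ (0, e^{−e}). Then for every t > 0 and every α > 0, the Lebesgue integral ∫_0^{e^{−e}} exp(t · g(λ)^α) dλ is finite if and only if α ≤ 2/d. -/
open MeasureTheory Real
open scoped ENNReal

private lemma logOneDiv_gt {lam K : ℝ} (h0 : 0 < lam) (h1 : lam < Real.exp (-K)) :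
    K < Real.log (1 / lam) := by
  rw [one_div, Real.log_inv]
  have h := Real.log_lt_log h0 h1
  rw [Real.log_exp] at h
  linarith

set_option maxHeartbeats 1000000

/-- Let `d` be a positive integer and
`g(λ) = (log(1/λ)/log(log(1/λ)))^{d/2}` for `λ ∈ (0, e^{−e})`. Then for every `t > 0` and
every `α > 0`, the Lebesgue integral `∫_0^{e^{−e}} exp(t·g(λ)^α) dλ` is finite if and only
if `α ≤ 2/d`. -/
theorem raikov_warzel_integrability (d : ℕ) (hd : 0 < d) (t α : ℝ) (ht : 0 < t)
    (hα : 0 < α) :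
    (∫⁻ lam in Set.Ioo (0:ℝ) (Real.exp (-Real.exp 1)),
        ENNReal.ofReal
          (Real.exp (t *
            ((Real.log (1 / lam) / Real.log (Real.log (1 / lam))) ^ ((d:ℝ) / 2)) ^ α))) < ⊤
      ↔ α ≤ 2 / (d:ℝ) := by
  have hd0 : (d:ℝ) ≠ 0 := Nat.cast_ne_zero.mpr hd.ne'
  have hdpos : (0:ℝ) < d := Nat.cast_pos.mpr hd
  have he1 : (1:ℝ) < Real.exp 1 := by
    have := Real.exp_one_gt_d9; linarith
  constructor
  · -- finiteness implies α ≤ 2/d (contrapositive)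
    intro hfin
    by_contra hcon
    push_neg at hcon  -- 2/d < α
    set β : ℝ := (d:ℝ)/2 * α with hβdef
    have hβ : 1 < β := by
      rw [hβdef]
      rw [div_lt_iff₀ hdpos] at hcon
      nlinarith
    have hβpos : (0:ℝ) < β := by linarith
    set ε : ℝ := (β - 1) / (2 * β) with hεdef
    have hε : 0 < ε := by
      apply div_pos <;> linarith
    have hεβpos : (0:ℝ) < ε ^ β := Real.rpow_pos_of_pos hε β
    set c : ℝ := max 1 (1 / (t * ε ^ β)) with hcdef
    have hc1 : (1:ℝ) ≤ c := le_max_left _ _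
    have hcK : 0 < c ^ (2 / (β - 1)) := Real.rpow_pos_of_pos (by linarith) _
    set K : ℝ := Real.exp 1 + c ^ (2 / (β - 1)) with hKdef
    have hKe : Real.exp 1 < K := by rw [hKdef]; linarith
    -- pointwise lower bound on Ioo 0 (exp (-K))
    have key : ∀ lam ∈ Set.Ioo (0:ℝ) (Real.exp (-K)),
        ENNReal.ofReal (lam ^ (-1 : ℝ)) ≤
        ENNReal.ofReal
          (Real.exp (t *
            ((Real.log (1 / lam) / Real.log (Real.log (1 / lam))) ^ ((d:ℝ) / 2)) ^ α)) := by
      intro lam hlam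
      obtain ⟨h0, h1⟩ := hlam
      set L : ℝ := Real.log (1 / lam) with hL
      have hLK : K < L := logOneDiv_gt h0 h1
      have hLe : Real.exp 1 < L := lt_trans hKe hLK
      have hL1 : (1:ℝ) < L := lt_trans he1 hLe
      have hLpos : (0:ℝ) < L := by linarith
      have hlogL : 1 < Real.log L := by
        calc (1:ℝ) = Real.log (Real.exp 1) := (Real.log_exp 1).symm
        _ < Real.log L := Real.log_lt_log (Real.exp_pos 1) hLe
      have hlogLpos : 0 < Real.log L := by linarith
      have hquotpos : 0 < L / Real.log L := div_pos hLpos hlogLpos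
      -- rewrite the iterated rpow
      have hXsimp : ((L / Real.log L) ^ ((d:ℝ)/2)) ^ α = (L / Real.log L) ^ β := by
        rw [← Real.rpow_mul hquotpos.le]
      -- log L ≤ L ^ ε / ε
      have hlog_le : Real.log L ≤ L ^ ε / ε := Real.log_le_rpow_div hLpos.le hε
      have hLεpos : 0 < L ^ ε := Real.rpow_pos_of_pos hLpos ε
      -- L / log L ≥ ε * L ^ (1 - ε)
      have hstep1 : ε * L ^ (1 - ε) ≤ L / Real.log L := by
        have h2 : L / (L ^ ε / ε) ≤ L / Real.log L := by
          apply div_le_div_of_nonneg_left hLpos.le hlogLpos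
          exact hlog_le
        have h3 : L / (L ^ ε / ε) = ε * L ^ (1 - ε) := by
          rw [Real.rpow_sub hLpos, Real.rpow_one]
          field_simp
        linarith [h3 ▸ h2]
      have hrhs_pos : 0 ≤ ε * L ^ (1 - ε) := by positivity
      -- raise to power β
      have hstep2 : ε ^ β * L ^ ((1 - ε) * β) ≤ (L / Real.log L) ^ β := by
        calc ε ^ β * L ^ ((1 - ε) * β) = (ε * L ^ (1 - ε)) ^ β := by
              rw [Real.mul_rpow hε.le (Real.rpow_pos_of_pos hLpos _).le,
                ← Real.rpow_mul hLpos.le]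
        _ ≤ (L / Real.log L) ^ β := Real.rpow_le_rpow hrhs_pos hstep1 hβpos.le
      have hexp_eq : (1 - ε) * β = 1 + (β - 1) / 2 := by
        rw [hεdef]; field_simp; ring
      have hsplit : L ^ ((1 - ε) * β) = L * L ^ ((β - 1)/2) := by
        rw [hexp_eq, Real.rpow_add hLpos, Real.rpow_one]
      -- L ^ ((β-1)/2) ≥ c
      have hcL : c ≤ L ^ ((β - 1)/2) := by
        have h4 : c ^ (2/(β-1)) ≤ L := by rw [hKdef] at hLK; linarith [Real.exp_pos 1]
        have h5 : (c ^ (2/(β-1))) ^ ((β-1)/2) ≤ L ^ ((β-1)/2) :=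
          Real.rpow_le_rpow hcK.le h4 (by linarith : (0:ℝ) ≤ (β-1)/2)
        have h6 : (c ^ (2/(β-1))) ^ ((β-1)/2) = c := by
          rw [← Real.rpow_mul (by linarith : (0:ℝ) ≤ c)]
          rw [show (2/(β-1)) * ((β-1)/2) = 1 by
            rw [div_mul_div_comm, mul_comm (β-1) 2,
              div_self (ne_of_gt (by linarith : (0:ℝ) < 2 * (β-1)))], Real.rpow_one]
        linarith [h6 ▸ h5]
      have hctε : 1 ≤ t * ε ^ β * c := by
        have h7 : 1 / (t * ε ^ β) ≤ c := le_max_right _ _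
        have h8 : 0 < t * ε ^ β := by positivity
        rw [div_le_iff₀ h8] at h7
        calc (1:ℝ) ≤ c * (t * ε ^ β) := h7
        _ = t * ε ^ β * c := by ring
      -- main inequality: L ≤ t * (L/log L)^β
      have hmain : L ≤ t * ((L / Real.log L) ^ ((d:ℝ)/2)) ^ α := by
        rw [hXsimp]
        have h9 : t * (ε ^ β * L ^ ((1 - ε) * β)) ≤ t * (L / Real.log L) ^ β :=
          mul_le_mul_of_nonneg_left hstep2 ht.le
        have h10 : L ≤ t * (ε ^ β * L ^ ((1 - ε) * β)) := by
          rw [hsplit]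
          have hA : t * ε ^ β * c * L ≤ t * ε ^ β * L ^ ((β-1)/2) * L := by
            have h12 := mul_le_mul_of_nonneg_left hcL
              (by positivity : (0:ℝ) ≤ t * ε ^ β)
            exact mul_le_mul_of_nonneg_right h12 hLpos.le
          have hB : L ≤ t * ε ^ β * c * L := by
            have h13 := mul_le_mul_of_nonneg_right hctε hLpos.le
            linarith [h13]
          calc L ≤ t * ε ^ β * L ^ ((β-1)/2) * L := le_trans hB hA
          _ = t * (ε ^ β * (L * L ^ ((β-1)/2))) := by ring
        linarith
      -- conclude pointwise
      apply ENNReal.ofReal_le_ofReal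
      rw [Real.rpow_def_of_pos h0]
      apply Real.exp_le_exp.mpr
      have hlog : Real.log lam * (-1) = L := by
        rw [hL, one_div, Real.log_inv]; ring
      rw [hlog]
      exact hmain
    -- the integral over the smaller interval is infinite
    have hsub : Set.Ioo (0:ℝ) (Real.exp (-K)) ⊆ Set.Ioo 0 (Real.exp (-Real.exp 1)) := by
      apply Set.Ioo_subset_Ioo le_rfl
      exact Real.exp_le_exp.mpr (by linarith)
    have hδpos : 0 < Real.exp (-K) := Real.exp_pos _
    have hinv_top : (∫⁻ lam in Set.Ioo (0:ℝ) (Real.exp (-K)),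
        ENNReal.ofReal (lam ^ (-1 : ℝ))) = ⊤ := by
      by_contra hne
      have hmeas : Measurable fun x : ℝ => x ^ (-1 : ℝ) := by
        have heq : (fun x : ℝ => x ^ (-1:ℝ)) = fun x : ℝ => x⁻¹ := by
          funext x
          rw [show (-1:ℝ) = ((-1:ℤ):ℝ) by norm_num, Real.rpow_intCast, zpow_neg_one]
        rw [heq]
        exact measurable_inv
      have hnonneg : 0 ≤ᵐ[volume.restrict (Set.Ioo (0:ℝ) (Real.exp (-K)))]
          fun x : ℝ => x ^ (-1 : ℝ) := by
        filter_upwards [ae_restrict_mem measurableSet_Ioo] with x hx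
        exact (Real.rpow_pos_of_pos hx.1 _).le
      have hint : IntegrableOn (fun x : ℝ => x ^ (-1 : ℝ))
          (Set.Ioo (0:ℝ) (Real.exp (-K))) := by
        refine ⟨hmeas.aestronglyMeasurable, ?_⟩
        rw [hasFiniteIntegral_iff_ofReal hnonneg]
        exact lt_top_iff_ne_top.mpr hne
      rw [intervalIntegral.integrableOn_Ioo_rpow_iff hδpos] at hint
      linarith
    have : (∫⁻ lam in Set.Ioo (0:ℝ) (Real.exp (-Real.exp 1)),
        ENNReal.ofReal
          (Real.exp (t *
            ((Real.log (1 / lam) / Real.log (Real.log (1 / lam))) ^ ((d:ℝ) / 2)) ^ α))) = ⊤ := by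
      rw [eq_top_iff, ← hinv_top]
      calc ∫⁻ lam in Set.Ioo (0:ℝ) (Real.exp (-K)), ENNReal.ofReal (lam ^ (-1 : ℝ))
          ≤ ∫⁻ lam in Set.Ioo (0:ℝ) (Real.exp (-K)),
            ENNReal.ofReal
              (Real.exp (t *
                ((Real.log (1 / lam) / Real.log (Real.log (1 / lam))) ^ ((d:ℝ) / 2)) ^ α)) :=
            setLIntegral_mono' measurableSet_Ioo key
        _ ≤ _ := lintegral_mono_set hsub
    rw [this] at hfin
    exact absurd hfin (lt_irrefl ⊤)
  · -- α ≤ 2/d implies finiteness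
    intro hle
    set M : ℝ := Real.exp (2*t) + Real.exp 1 with hMdef
    have hMpos : 0 < M := by positivity
    have key : ∀ lam ∈ Set.Ioo (0:ℝ) (Real.exp (-Real.exp 1)),
        ENNReal.ofReal
          (Real.exp (t *
            ((Real.log (1 / lam) / Real.log (Real.log (1 / lam))) ^ ((d:ℝ) / 2)) ^ α)) ≤
        ENNReal.ofReal (Real.exp (t * M) * lam ^ (-(1/2) : ℝ)) := by
      intro lam hlam
      obtain ⟨h0, h1⟩ := hlam
      set L : ℝ := Real.log (1 / lam) with hL
      have hLe : Real.exp 1 < L := logOneDiv_gt h0 h1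
      have hL1 : (1:ℝ) < L := lt_trans he1 hLe
      have hLpos : (0:ℝ) < L := by linarith
      have hlogL : 1 < Real.log L := by
        calc (1:ℝ) = Real.log (Real.exp 1) := (Real.log_exp 1).symm
        _ < Real.log L := Real.log_lt_log (Real.exp_pos 1) hLe
      have hlogLpos : 0 < Real.log L := by linarith
      have hquot : 1 ≤ L / Real.log L := by
        rw [le_div_iff₀ hlogLpos, one_mul]
        linarith [Real.log_le_sub_one_of_pos hLpos]
      have hX1 : 1 ≤ (L / Real.log L) ^ ((d:ℝ)/2) :=
        Real.one_le_rpow hquot (by positivity)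
      have hXα : ((L / Real.log L) ^ ((d:ℝ)/2)) ^ α ≤ ((L / Real.log L) ^ ((d:ℝ)/2)) ^ (2/(d:ℝ)) :=
        Real.rpow_le_rpow_of_exponent_le hX1 hle
      have hXsimp : ((L / Real.log L) ^ ((d:ℝ)/2)) ^ (2/(d:ℝ)) = L / Real.log L := by
        rw [← Real.rpow_mul (by linarith : (0:ℝ) ≤ L / Real.log L),
          show ((d:ℝ)/2) * (2/(d:ℝ)) = 1 by field_simp, Real.rpow_one]
      have hmain : t * (L / Real.log L) ≤ t * M + (1/2) * L := by
        rcases le_or_gt M L with h | h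
        · have h2t : 2 * t ≤ Real.log L := by
            calc 2 * t = Real.log (Real.exp (2*t)) := (Real.log_exp _).symm
            _ ≤ Real.log L := Real.log_le_log (Real.exp_pos _)
                (by rw [hMdef] at h; linarith [Real.exp_pos 1])
          have hlt : t * (L / Real.log L) ≤ (1/2) * L := by
            rw [mul_div_assoc']
            rw [div_le_iff₀ hlogLpos]
            nlinarith
          nlinarith
        · have hlt : L / Real.log L ≤ L := by
            rw [div_le_iff₀ hlogLpos]
            nlinarith
          have : t * (L / Real.log L) ≤ t * M := by nlinarith
          nlinarith
      apply ENNReal.ofReal_le_ofReal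
      have hrw : Real.exp (t * M) * lam ^ (-(1/2) : ℝ) = Real.exp (t * M + (1/2) * L) := by
        rw [Real.rpow_def_of_pos h0, ← Real.exp_add]
        congr 1
        have : Real.log lam = -L := by rw [hL, one_div, Real.log_inv]; ring
        rw [this]; ring
      rw [hrw]
      apply Real.exp_le_exp.mpr
      calc t * ((L / Real.log L) ^ ((d:ℝ)/2)) ^ α
          ≤ t * (((L / Real.log L) ^ ((d:ℝ)/2)) ^ (2/(d:ℝ))) :=
            mul_le_mul_of_nonneg_left hXα ht.le
        _ = t * (L / Real.log L) := by rw [hXsimp]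
        _ ≤ t * M + (1/2) * L := hmain
    -- dominating function is integrable
    have hint : IntegrableOn (fun x : ℝ => Real.exp (t * M) * x ^ (-(1/2) : ℝ))
        (Set.Ioo (0:ℝ) (Real.exp (-Real.exp 1))) := by
      apply Integrable.const_mul
      exact (intervalIntegral.integrableOn_Ioo_rpow_iff (Real.exp_pos _)).mpr (by norm_num)
    have hnonneg : 0 ≤ᵐ[volume.restrict (Set.Ioo (0:ℝ) (Real.exp (-Real.exp 1)))]
        fun x : ℝ => Real.exp (t * M) * x ^ (-(1/2) : ℝ) := by
      filter_upwards [ae_restrict_mem measurableSet_Ioo] with x hx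
      have hx1 : 0 < x := hx.1
      positivity
    have hfin2 : (∫⁻ x in Set.Ioo (0:ℝ) (Real.exp (-Real.exp 1)),
        ENNReal.ofReal (Real.exp (t * M) * x ^ (-(1/2) : ℝ))) < ⊤ := by
      rw [← hasFiniteIntegral_iff_ofReal hnonneg]
      exact hint.hasFiniteIntegral
    exact lt_of_le_of_lt (setLIntegral_mono' measurableSet_Ioo key) hfin2
end
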